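/- arXiv:2001.04257 — 6 statements merged into one kernel-verified Lean document; each statement's English description precedes it below -/
import Mathlib

section
/- Let M be a symmetric n×n real matrix with eigenvalues λ₁ ≤ λ₂ ≤ ... ≤ λₙ such that σ₁(λ) > 0 and σ₂(λ) > 0 (i.e. λ lies in the closure of the Gårding cone Γ₂). Then for every unit vector m ∈ ℝⁿ, one has Σᵢⱼ Mᵢⱼ(δᵢⱼ − mᵢmⱼ) ≥ 0. -/
open scoped Matrix

/-- `j`-th elementary symmetric polynomial of `lam : Fin n → ℝ`. -/
noncomputable def esym (n j : ℕ) (lam : Fin n → ℝ) : ℝ :=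
  ∑ s ∈ Finset.univ.powersetCard j, ∏ i ∈ s, lam i

/-- The Gårding cone `Γ₂ = {λ : σ₁(λ) > 0, σ₂(λ) > 0}`. -/
def Gamma2 (n : ℕ) : Set (Fin n → ℝ) :=
  {lam | 0 < esym n 1 lam ∧ 0 < esym n 2 lam}

lemma two_mul_esym2 {ι : Type*} [DecidableEq ι] (s : Finset ι) (f : ι → ℝ) :
    2 * ∑ t ∈ s.powersetCard 2, ∏ i ∈ t, f i
      = (∑ i ∈ s, f i) ^ 2 - ∑ i ∈ s, f i ^ 2 := by
  induction s using Finset.induction_on with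
  | empty =>
    rw [Finset.powersetCard_eq_empty.mpr (by simp), Finset.sum_empty]
    simp
  | @insert x s hx ih =>
    have h2 : (2 : ℕ) = Nat.succ 1 := rfl
    rw [h2, Finset.powersetCard_succ_insert hx]
    have hdisj : Disjoint (Finset.powersetCard (Nat.succ 1) s)
        ((Finset.powersetCard 1 s).image (insert x)) := by
      rw [Finset.disjoint_left]
      intro t ht ht'
      obtain ⟨u, hu, rfl⟩ := Finset.mem_image.mp ht'
      have := (Finset.mem_powersetCard.mp ht).1
      exact hx (this (Finset.mem_insert_self x u))
    rw [Finset.sum_union hdisj]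
    have hinj : ∀ u ∈ Finset.powersetCard 1 s, ∀ v ∈ Finset.powersetCard 1 s,
        insert x u = insert x v → u = v := by
      intro u hu v hv huv
      have hxu : x ∉ u := fun h => hx ((Finset.mem_powersetCard.mp hu).1 h)
      have hxv : x ∉ v := fun h => hx ((Finset.mem_powersetCard.mp hv).1 h)
      ext a
      constructor
      · intro ha
        have : a ∈ insert x v := huv ▸ Finset.mem_insert_of_mem ha
        rcases Finset.mem_insert.mp this with rfl | h
        · exact absurd ha hxu
        · exact h
      · intro ha
        have : a ∈ insert x u := huv ▸ Finset.mem_insert_of_mem ha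
        rcases Finset.mem_insert.mp this with rfl | h
        · exact absurd ha hxv
        · exact h
    rw [Finset.sum_image hinj]
    have himg : ∑ u ∈ Finset.powersetCard 1 s, ∏ i ∈ insert x u, f i
        = f x * ∑ i ∈ s, f i := by
      rw [Finset.powersetCard_one, Finset.sum_map, Finset.mul_sum]
      refine Finset.sum_congr rfl fun i hi => ?_
      have hxi : x ∉ ({i} : Finset ι) := by
        simp only [Finset.mem_singleton]
        rintro rfl; exact hx hi
      rw [show (⟨_, Finset.singleton_injective⟩ : ι ↪ Finset ι) i = {i} from rfl,
        Finset.prod_insert hxi, Finset.prod_singleton]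
    rw [himg, Finset.sum_insert hx, Finset.sum_insert hx]
    rw [mul_add, ih]
    ring

lemma esym_one_eq (n : ℕ) (lam : Fin n → ℝ) : esym n 1 lam = ∑ i, lam i := by
  unfold esym
  rw [Finset.powersetCard_one, Finset.sum_map]
  simp

lemma esym_continuous (n j : ℕ) : Continuous (esym n j) := by
  unfold esym
  exact continuous_finset_sum _ fun s _ =>
    continuous_finset_prod _ fun i _ => continuous_apply i

lemma closure_gamma2 {n : ℕ} {lam : Fin n → ℝ} (h : lam ∈ closure (Gamma2 n)) :
    0 ≤ esym n 1 lam ∧ 0 ≤ esym n 2 lam := by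
  have hclosed : IsClosed {l : Fin n → ℝ | 0 ≤ esym n 1 l ∧ 0 ≤ esym n 2 l} :=
    (isClosed_le continuous_const (esym_continuous n 1)).inter
      (isClosed_le continuous_const (esym_continuous n 2))
  have hsub : Gamma2 n ⊆ {l : Fin n → ℝ | 0 ≤ esym n 1 l ∧ 0 ≤ esym n 2 l} :=
    fun l hl => ⟨le_of_lt hl.1, le_of_lt hl.2⟩
  exact closure_minimal hsub hclosed h

lemma lam_le_sum {n : ℕ} (lam : Fin n → ℝ) (h1 : 0 ≤ ∑ i, lam i)
    (h2 : 0 ≤ esym n 2 lam) (i : Fin n) : lam i ≤ ∑ j, lam j := by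
  have hid := two_mul_esym2 (Finset.univ : Finset (Fin n)) lam
  have hkey : ∑ j, lam j ^ 2 ≤ (∑ j, lam j) ^ 2 := by
    have : esym n 2 lam = ∑ t ∈ Finset.univ.powersetCard 2, ∏ k ∈ t, lam k := rfl
    nlinarith [h2, hid]
  have hsingle : lam i ^ 2 ≤ ∑ j, lam j ^ 2 :=
    Finset.single_le_sum (fun j _ => sq_nonneg (lam j)) (Finset.mem_univ i)
  nlinarith [hkey, hsingle, h1]

/-- if `M` is a real symmetric `n × n` matrix whose eigenvalue vector lies in the
closure of `Γ₂`, then for every unit vector `m`, `Σᵢⱼ Mᵢⱼ (δᵢⱼ − mᵢ mⱼ) ≥ 0`. -/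
theorem stmt0 (n : ℕ) (M : Matrix (Fin n) (Fin n) ℝ) (hM : M.IsHermitian)
    (hΓ : hM.eigenvalues ∈ closure (Gamma2 n))
    (m : Fin n → ℝ) (hm : ∑ i, m i ^ 2 = 1) :
    0 ≤ ∑ i, ∑ j, M i j * ((if i = j then (1 : ℝ) else 0) - m i * m j) := by
  obtain ⟨he1, he2⟩ := closure_gamma2 hΓ
  set lam := hM.eigenvalues with hlam
  have h1 : 0 ≤ ∑ i, lam i := by rwa [← esym_one_eq]
  have hle : ∀ i, lam i ≤ ∑ j, lam j := lam_le_sum lam h1 he2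
  set U : Matrix (Fin n) (Fin n) ℝ := (hM.eigenvectorUnitary : Matrix (Fin n) (Fin n) ℝ)
    with hU
  have hspec : M = U * Matrix.diagonal (RCLike.ofReal ∘ lam) * star U :=
    hM.spectral_theorem
  have hDiag : Matrix.diagonal (RCLike.ofReal ∘ lam) = Matrix.diagonal lam := by
    congr 1
  rw [hDiag] at hspec
  have hUstar : star U * U = 1 := Unitary.coe_star_mul_self hM.eigenvectorUnitary
  have hUstar' : U * star U = 1 := Unitary.coe_mul_star_self hM.eigenvectorUnitary
  set w : Fin n → ℝ := (star U) *ᵥ m with hw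
  -- step 1: rewrite the goal
  have hgoal : ∑ i, ∑ j, M i j * ((if i = j then (1 : ℝ) else 0) - m i * m j)
      = Matrix.trace M - m ⬝ᵥ (M *ᵥ m) := by
    rw [Matrix.trace, dotProduct]
    rw [← Finset.sum_sub_distrib]
    refine Finset.sum_congr rfl fun i _ => ?_
    rw [Matrix.mulVec, dotProduct]
    simp only [mul_sub, Finset.sum_sub_distrib]
    congr 1
    · simp [Matrix.diag]
    · rw [Finset.mul_sum]
      refine Finset.sum_congr rfl fun j _ => ?_
      ring
  rw [hgoal]
  -- step 2: trace
  have htrace : Matrix.trace M = ∑ i, lam i := by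
    rw [hspec, Matrix.trace_mul_comm, ← Matrix.mul_assoc, hUstar, Matrix.one_mul,
      Matrix.trace_diagonal]
  -- step 3: quadratic form
  have hform : m ⬝ᵥ (M *ᵥ m) = ∑ i, lam i * w i ^ 2 := by
    rw [hspec, ← Matrix.mulVec_mulVec, ← Matrix.mulVec_mulVec]
    rw [Matrix.dotProduct_mulVec, ← Matrix.mulVec_transpose]
    have hTrans : U.transpose = star U := by
      ext i j
      simp [Matrix.star_eq_conjTranspose, Matrix.conjTranspose_apply]
    rw [hTrans, ← hw, dotProduct]
    refine Finset.sum_congr rfl fun i _ => ?_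
    rw [Matrix.mulVec_diagonal]
    ring
  -- step 4: norm of w
  have hnorm : ∑ i, w i ^ 2 = 1 := by
    have : ∑ i, w i ^ 2 = w ⬝ᵥ w := by
      rw [dotProduct]; exact Finset.sum_congr rfl fun i _ => (sq (w i))
    rw [this, hw, Matrix.dotProduct_mulVec, ← Matrix.mulVec_transpose]
    have hTrans : (star U).transpose = U := by
      ext i j
      simp [Matrix.star_eq_conjTranspose, Matrix.conjTranspose_apply]
    rw [hTrans, Matrix.mulVec_mulVec, hUstar', Matrix.one_mulVec, dotProduct]
    rw [← hm]
    exact Finset.sum_congr rfl fun i _ => (sq (m i)).symm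
  rw [htrace, hform]
  have hfin : ∑ i, lam i - ∑ i, lam i * w i ^ 2
      = ∑ i, w i ^ 2 * ((∑ j, lam j) - lam i) := by
    have h' : ∑ i, w i ^ 2 * ((∑ j, lam j) - lam i)
        = (∑ j, lam j) * ∑ i, w i ^ 2 - ∑ i, lam i * w i ^ 2 := by
      rw [Finset.mul_sum, ← Finset.sum_sub_distrib]
      exact Finset.sum_congr rfl fun i _ => by ring
    rw [h', hnorm, mul_one]
  rw [sub_nonneg] at *
  rw [← sub_nonneg, hfin]
  exact Finset.sum_nonneg fun i _ =>
    mul_nonneg (sq_nonneg _) (sub_nonneg.mpr (hle i))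
end

section
/- For n ≥ 3 and 2 ≤ k ≤ n, let ξ be a C² real function on an interval with |ξ'| > 1 and satisfying the ODE e^{2kξ}(1 − |ξ'|²)^{k−1}[ξ'' + ((n−2k)/(2k))(1 − |ξ'|²)] = (−1)ᵏ n/(2k). Then the quantity H(ξ,ξ') := e^{(2k−n)ξ}(1 − |ξ'|²)ᵏ − (−1)ᵏ e^{−nξ} is constant along the solution, i.e. d/dt [H(ξ(t),ξ'(t))] = 0. -/
open Real

/-!
Differentiating `H(ξ, ξ')` and using `e^{(2k−n)ξ} = e^{2kξ} e^{−nξ}` and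
`(1 − ξ'²)ᵏ = (1 − ξ'²)^{k−1} (1 − ξ'²)` factors the derivative as
`ξ' e^{−nξ} ((−1)ᵏ n − e^{2kξ}(1 − ξ'²)^{k−1}(2k ξ'' + (n − 2k)(1 − ξ'²)))`,
and the bracket is `2k` times the difference of the two sides of the ODE.
-/

/-- The first integral `H(x,y) = e^{(2k−n)x}(1 − y²)ᵏ − (−1)ᵏ e^{−nx}`. -/
noncomputable def Hfun (n k : ℕ) (x y : ℝ) : ℝ :=
  Real.exp ((2 * (k : ℝ) - n) * x) * (1 - y ^ 2) ^ k - (-1 : ℝ) ^ k * Real.exp (-(n : ℝ) * x)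

theorem hasDerivAt_Hfun_comp (n k : ℕ) {x y : ℝ → ℝ} {x' y' t : ℝ}
    (hx : HasDerivAt x x' t) (hy : HasDerivAt y y' t) :
    HasDerivAt (fun s => Hfun n k (x s) (y s))
      ((2 * (k : ℝ) - n) * x' * exp ((2 * (k : ℝ) - n) * x t) * (1 - y t ^ 2) ^ k
        - exp ((2 * (k : ℝ) - n) * x t) * (k * (1 - y t ^ 2) ^ (k - 1) * (2 * y t * y'))
        + (-1 : ℝ) ^ k * n * x' * exp (-(n : ℝ) * x t)) t := by
  have hE := (hx.const_mul (2 * (k : ℝ) - n)).exp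
  have hP := ((hy.pow 2).const_sub 1).pow k
  have hF := ((hx.const_mul (-(n : ℝ))).exp).const_mul ((-1 : ℝ) ^ k)
  refine ((hE.mul hP).sub hF).congr_deriv ?_
  simp only [Pi.pow_apply]
  push_cast
  ring

theorem Hfun_deriv_factor (n k : ℕ) (hk : k ≠ 0) (x y y' : ℝ) :
    (2 * (k : ℝ) - n) * y * exp ((2 * (k : ℝ) - n) * x) * (1 - y ^ 2) ^ k
        - exp ((2 * (k : ℝ) - n) * x) * (k * (1 - y ^ 2) ^ (k - 1) * (2 * y * y'))
        + (-1 : ℝ) ^ k * n * y * exp (-(n : ℝ) * x)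
      = y * exp (-(n : ℝ) * x) * ((-1 : ℝ) ^ k * n
          - exp (2 * (k : ℝ) * x) * (1 - y ^ 2) ^ (k - 1)
            * (2 * k * y' + ((n : ℝ) - 2 * k) * (1 - y ^ 2))) := by
  have hexp : exp ((2 * (k : ℝ) - n) * x) = exp (2 * (k : ℝ) * x) * exp (-(n : ℝ) * x) := by
    rw [← exp_add]
    ring_nf
  have hpow : (1 - y ^ 2) ^ k = (1 - y ^ 2) ^ (k - 1) * (1 - y ^ 2) := by
    rw [← pow_succ, Nat.sub_add_cancel (Nat.one_le_iff_ne_zero.mpr hk)]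
  rw [hexp, hpow]
  ring

theorem stmt3_general (n k : ℕ) (hk2 : 2 ≤ k)
    (I : Set ℝ)
    (ξ ξ' ξ'' : ℝ → ℝ)
    (hderiv1 : ∀ t ∈ I, HasDerivAt ξ (ξ' t) t)
    (hderiv2 : ∀ t ∈ I, HasDerivAt ξ' (ξ'' t) t)
    (hODE : ∀ t ∈ I,
      Real.exp (2 * k * ξ t) * (1 - (ξ' t) ^ 2) ^ (k - 1) *
          (ξ'' t + (((n : ℝ) - 2 * k) / (2 * k)) * (1 - (ξ' t) ^ 2))
        = (-1 : ℝ) ^ k * n / (2 * k)) :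
    ∀ t ∈ I, HasDerivAt (fun s => Hfun n k (ξ s) (ξ' s)) 0 t := by
  intro t ht
  have hk : k ≠ 0 := by omega
  have h2k : (2 * (k : ℝ)) ≠ 0 := by positivity
  have hODE_cleared : exp (2 * (k : ℝ) * ξ t) * (1 - ξ' t ^ 2) ^ (k - 1)
      * (2 * k * ξ'' t + ((n : ℝ) - 2 * k) * (1 - ξ' t ^ 2)) = (-1 : ℝ) ^ k * n := by
    have h := hODE t ht
    field_simp at h
    linear_combination h
  refine (hasDerivAt_Hfun_comp n k (hderiv1 t ht) (hderiv2 t ht)).congr_deriv ?_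
  rw [Hfun_deriv_factor n k hk, hODE_cleared, sub_self, mul_zero]

/-- along a `C²` solution of
`e^{2kξ}(1 − |ξ'|²)^{k−1}[ξ'' + ((n−2k)/(2k))(1 − |ξ'|²)] = (−1)ᵏ n/(2k)` with `|ξ'| > 1`,
the quantity `H(ξ, ξ')` is constant, i.e. `d/dt H(ξ(t), ξ'(t)) = 0`. -/
theorem stmt3 (n k : ℕ) (hn : 3 ≤ n) (hk2 : 2 ≤ k) (hkn : k ≤ n)
    (I : Set ℝ) (hI : IsOpen I) (hconn : I.OrdConnected)
    (ξ ξ' ξ'' : ℝ → ℝ)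
    (hderiv1 : ∀ t ∈ I, HasDerivAt ξ (ξ' t) t)
    (hderiv2 : ∀ t ∈ I, HasDerivAt ξ' (ξ'' t) t)
    (hgrad : ∀ t ∈ I, 1 < |ξ' t|)
    (hODE : ∀ t ∈ I,
      Real.exp (2 * k * ξ t) * (1 - (ξ' t) ^ 2) ^ (k - 1) *
          (ξ'' t + (((n : ℝ) - 2 * k) / (2 * k)) * (1 - (ξ' t) ^ 2))
        = (-1 : ℝ) ^ k * n / (2 * k)) :
    ∀ t ∈ I, HasDerivAt (fun s => Hfun n k (ξ s) (ξ' s)) 0 t :=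
  stmt3_general n k hk2 I ξ ξ' ξ'' hderiv1 hderiv2 hODE
end

section
/- Let n ≥ 3, 2 ≤ k ≤ n, and suppose u is a positive radially symmetric function on an annulus {a < |x| < b}, twice differentiable at a point where, in cylindrical coordinates t = ln r − (1/2)ln(ab), ξ(t) = −(2/(n−2)) ln u − ln r, one has σ_k(λ(−A^u)) > 0 and |ξ'| > 1. Then σᵢ(λ(−A^u)) > 0 for all 1 ≤ i ≤ k, i.e. λ(−A^u) ∈ Γ_k. -/
open Real

lemma esym_formula (m j : ℕ) (A B : ℝ) :
    esym (m+1) (j+1) (fun i : Fin (m+1) => if (i : ℕ) = 0 then A else B)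
      = m.choose (j+1) * B^(j+1) + m.choose j * (A * B^j) := by
  classical
  set lam : Fin (m+1) → ℝ := fun i => if (i : ℕ) = 0 then A else B with hlam
  have hconst : ∀ t : Finset (Fin (m+1)), t ⊆ Finset.univ.erase 0 →
      ∏ i ∈ t, lam i = B ^ t.card := by
    intro t hsub
    rw [show ∏ i ∈ t, lam i = ∏ i ∈ t, B from
      Finset.prod_congr rfl fun i hi => ?_, Finset.prod_const]
    have : i ≠ 0 := Finset.ne_of_mem_erase (hsub hi)
    exact if_neg fun h => this (Fin.ext (by simpa using h))
  have h0 : (0 : Fin (m+1)) ∉ (Finset.univ.erase 0) := Finset.notMem_erase _ _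
  have huniv : (Finset.univ : Finset (Fin (m+1))) = insert 0 (Finset.univ.erase 0) := by
    rw [Finset.insert_erase (Finset.mem_univ 0)]
  have hcard : (Finset.univ.erase (0 : Fin (m+1))).card = m := by
    rw [Finset.card_erase_of_mem (Finset.mem_univ 0), Finset.card_univ]
    simp
  unfold esym
  rw [huniv, Finset.powersetCard_succ_insert h0]
  have hdisj : Disjoint ((Finset.univ.erase (0:Fin (m+1))).powersetCard (j+1))
      (((Finset.univ.erase (0:Fin (m+1))).powersetCard j).image (insert 0)) := by
    rw [Finset.disjoint_left]
    intro s hs hs'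
    obtain ⟨hsub, -⟩ := Finset.mem_powersetCard.mp hs
    obtain ⟨t, ht, rfl⟩ := Finset.mem_image.mp hs'
    exact (Finset.notMem_erase 0 _) (hsub (Finset.mem_insert_self 0 t))
  rw [Finset.sum_union hdisj]
  have h1 : ∑ s ∈ (Finset.univ.erase (0:Fin (m+1))).powersetCard (j+1), ∏ i ∈ s, lam i
      = m.choose (j+1) * B^(j+1) := by
    have : ∀ s ∈ (Finset.univ.erase (0:Fin (m+1))).powersetCard (j+1),
        ∏ i ∈ s, lam i = B^(j+1) := by
      intro s hs
      obtain ⟨hsub, hc⟩ := Finset.mem_powersetCard.mp hs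
      rw [hconst s hsub, hc]
    rw [Finset.sum_congr rfl this, Finset.sum_const, Finset.card_powersetCard, hcard,
      nsmul_eq_mul]
  have h2 : ∑ s ∈ ((Finset.univ.erase (0:Fin (m+1))).powersetCard j).image (insert 0),
      ∏ i ∈ s, lam i = m.choose j * (A * B^j) := by
    rw [Finset.sum_image ?inj]
    case inj =>
      intro t ht t' ht' heq
      have h0t : (0:Fin (m+1)) ∉ t :=
        fun h => (Finset.notMem_erase 0 _) ((Finset.mem_powersetCard.mp ht).1 h)
      have h0t' : (0:Fin (m+1)) ∉ t' :=
        fun h => (Finset.notMem_erase 0 _) ((Finset.mem_powersetCard.mp ht').1 h)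
      rw [← Finset.erase_insert h0t, ← Finset.erase_insert h0t', heq]
    have : ∀ t ∈ (Finset.univ.erase (0:Fin (m+1))).powersetCard j,
        ∏ i ∈ insert 0 t, lam i = A * B^j := by
      intro t ht
      obtain ⟨hsub, hc⟩ := Finset.mem_powersetCard.mp ht
      have h0t : (0:Fin (m+1)) ∉ t := fun h => (Finset.notMem_erase 0 _) (hsub h)
      rw [Finset.prod_insert h0t, hconst t hsub, hc]
      simp [hlam]
    rw [Finset.sum_congr rfl this, Finset.sum_const, Finset.card_powersetCard, hcard,
      nsmul_eq_mul]
  rw [h1, h2]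

lemma choose_cross (m i k : ℕ) (hik : i ≤ k) :
    m.choose i * m.choose (k+1) ≤ m.choose (i+1) * m.choose k := by
  have h : (i+1)*(m-k) ≤ (k+1)*(m-i) :=
    Nat.mul_le_mul (Nat.succ_le_succ hik) (Nat.sub_le_sub_left hik m)
  have key : m.choose i * m.choose (k+1) * ((i+1)*(k+1))
      ≤ m.choose (i+1) * m.choose k * ((i+1)*(k+1)) := by
    calc m.choose i * m.choose (k+1) * ((i+1)*(k+1))
        = m.choose i * (m.choose (k+1)*(k+1)) * (i+1) := by ring
      _ = m.choose i * (m.choose k * (m-k)) * (i+1) := by rw [Nat.choose_succ_right_eq]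
      _ = m.choose i * m.choose k * ((i+1)*(m-k)) := by ring
      _ ≤ m.choose i * m.choose k * ((k+1)*(m-i)) := Nat.mul_le_mul_left _ h
      _ = m.choose i * (m-i) * m.choose k * (k+1) := by ring
      _ = m.choose (i+1) * (i+1) * m.choose k * (k+1) := by rw [Nat.choose_succ_right_eq]
      _ = m.choose (i+1) * m.choose k * ((i+1)*(k+1)) := by ring
  exact Nat.le_of_mul_le_mul_right key (by positivity)

/-- for a radially symmetric `u`, in cylindrical coordinates the eigenvalues of
`−A^u` at a point of twice differentiability are `a = −e^{2ξ}(ξ'' + (ξ'²−1)/2)` (multiplicity 1)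
and `b = e^{2ξ}(ξ'²−1)/2` (multiplicity n−1), where `x = ξ(t)`, `y = ξ'(t)`, `z = ξ''(t)`.
If `σ_k(λ(−A^u)) > 0` and `|ξ'| > 1`, then `σᵢ(λ(−A^u)) > 0` for all `1 ≤ i ≤ k`, i.e.
`λ(−A^u) ∈ Γ_k`. -/
theorem stmt10 (n k : ℕ) (hn : 3 ≤ n) (hk2 : 2 ≤ k) (hkn : k ≤ n)
    (x y z : ℝ) (lam : Fin n → ℝ)
    (hlam : lam = fun i : Fin n =>
      if (i : ℕ) = 0 then -Real.exp (2 * x) * (z + (y ^ 2 - 1) / 2)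
      else Real.exp (2 * x) * (y ^ 2 - 1) / 2)
    (hgrad : 1 < |y|)
    (hk : 0 < esym n k lam) :
    ∀ i : ℕ, 1 ≤ i → i ≤ k → 0 < esym n i lam := by
  obtain ⟨m, rfl⟩ : ∃ m, n = m + 1 := ⟨n - 1, by omega⟩
  set A : ℝ := -Real.exp (2 * x) * (z + (y ^ 2 - 1) / 2) with hA
  set B : ℝ := Real.exp (2 * x) * (y ^ 2 - 1) / 2 with hB
  have hy2 : 1 < y ^ 2 := by nlinarith [sq_abs y, abs_nonneg y]
  have hBpos : 0 < B := by
    rw [hB]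
    have := Real.exp_pos (2 * x)
    nlinarith
  have hform : ∀ j : ℕ, esym (m+1) (j+1) lam
      = ((m.choose (j+1) : ℝ) * B + (m.choose j : ℝ) * A) * B ^ j := by
    intro j
    rw [hlam, esym_formula m j A B]
    ring
  obtain ⟨k', rfl⟩ : ∃ k', k = k' + 1 := ⟨k - 1, by omega⟩
  have hkey : 0 < (m.choose (k'+1) : ℝ) * B + (m.choose k' : ℝ) * A := by
    rw [hform k'] at hk
    by_contra h
    push_neg at h
    nlinarith [pow_pos hBpos k']
  intro i hi1 hik
  obtain ⟨i', rfl⟩ : ∃ i', i = i' + 1 := ⟨i - 1, by omega⟩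
  rw [hform i']
  refine mul_pos ?_ (pow_pos hBpos i')
  rcases eq_or_lt_of_le hik with heq | hlt
  · obtain rfl : i' = k' := by omega
    exact hkey
  -- now i' < k', so i' + 1 ≤ m
  have hi'm : i' + 1 ≤ m := by omega
  have hcipos : (0:ℝ) < (m.choose (i'+1) : ℝ) := by
    exact_mod_cast Nat.choose_pos hi'm
  have hdipos : (0:ℝ) < (m.choose i' : ℝ) := by
    exact_mod_cast Nat.choose_pos (by omega : i' ≤ m)
  have hdkpos : (0:ℝ) < (m.choose k' : ℝ) := by
    exact_mod_cast Nat.choose_pos (by omega : k' ≤ m)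
  rcases le_or_gt 0 A with hApos | hAneg
  · nlinarith [mul_nonneg (le_of_lt hdipos) hApos]
  · rcases le_or_gt (k' + 1) m with hkm | hkm
    · have hcross : (m.choose i' : ℝ) * (m.choose (k'+1) : ℝ)
          ≤ (m.choose (i'+1) : ℝ) * (m.choose k' : ℝ) := by
        exact_mod_cast choose_cross m i' k' (by omega)
      nlinarith [mul_pos hdipos hkey,
        mul_nonneg hBpos.le (sub_nonneg.mpr hcross), hdkpos]
    · -- k' + 1 = m + 1, so choose m (k'+1) = 0
      have hk1 : k' + 1 = m + 1 := by omega
      have : (m.choose (k'+1) : ℝ) = 0 := by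
        rw [hk1]; exact_mod_cast Nat.choose_eq_zero_of_lt (by omega)
      rw [this] at hkey
      nlinarith
end

section
/- Let φ : ℝⁿ → ℝ be C² near x₀ = (√(ab),0,...,0) with a,b > 0, and suppose φ ≤ u near x₀ and φ(x₀)=u(x₀), where u is a radially symmetric locally Lipschitz function whose one-sided radial derivatives of ln u at r = √(ab) are −(n−2)/√(ab) from the left and 0 from the right. Then: (1) −(n−2)/√(ab) ≤ ∂_{x₁} ln φ(x₀) ≤ 0; (2) ∂_{xⱼ} ln φ(x₀) = 0 for j = 2,...,n; (3) the (n−1)×(n−1) matrix (∂_{xᵢ}∂_{xⱼ}φ(x₀) − (1/√(ab)) ∂_{x₁}φ(x₀) δᵢⱼ)_{2≤i,j≤n} is negative semidefinite. -/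
/-!
Write `e₀` for the first coordinate vector, so `x₀ = √(ab) • e₀`. Along the ray `t ↦ t • e₀` the
function `t ↦ log φ (t • e₀) - log U t` has a local maximum at `t = √(ab)`, so the one-sided
derivatives of `log U` there bound the radial derivative of `log φ`.
Since `u` is constant on the sphere `‖x‖ = √(ab)`, the point `x₀` maximises `φ` on that sphere.
Composing `φ` with the great circles `t ↦ cos t • x₀ + sin t • v` (`v ⊥ x₀`, `‖v‖ = ‖x₀‖`) gives
vanishing tangential derivatives, and the second derivative of the composition at `0`, namely
`D²φ(x₀)(v, v) - Dφ(x₀) x₀`, is nonpositive.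
-/

open Set Filter Topology RealInnerProductSpace

theorem IsLocalMax.hasDerivWithinAt_Ici_nonpos {f : ℝ → ℝ} {a f' : ℝ} (h : IsLocalMax f a)
    (hf : HasDerivWithinAt f f' (Ici a) a) : f' ≤ 0 := by
  have hy : (1 : ℝ) ∈ posTangentConeAt (Ici a) a :=
    mem_posTangentConeAt_of_segment_subset (by simp [segment_eq_Icc, Icc_subset_Ici_self])
  simpa using (h.on (Ici a)).hasFDerivWithinAt_nonpos hf.hasFDerivWithinAt hy

theorem IsLocalMax.hasDerivWithinAt_Iic_nonneg {f : ℝ → ℝ} {a f' : ℝ} (h : IsLocalMax f a)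
    (hf : HasDerivWithinAt f f' (Iic a) a) : 0 ≤ f' := by
  have hy : (-1 : ℝ) ∈ posTangentConeAt (Iic a) a :=
    mem_posTangentConeAt_of_segment_subset (by simp [segment_eq_Icc', Icc_subset_Iic_self])
  simpa using (h.on (Iic a)).hasFDerivWithinAt_nonpos hf.hasFDerivWithinAt hy

/-- A positive second derivative would make `a` also a local minimum (second derivative test),
so `f` would be locally constant and its second derivative zero. -/
theorem IsLocalMax.deriv_deriv_nonpos {f : ℝ → ℝ} {a : ℝ} (h : IsLocalMax f a)
    (hc : ContinuousAt f a) : deriv (deriv f) a ≤ 0 := by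
  by_contra! hpos
  have hmin : IsLocalMin f a := isLocalMin_of_deriv_deriv_pos hpos h.deriv_eq_zero hc
  have hconst : f =ᶠ[𝓝 a] fun _ => f a := by
    filter_upwards [h, hmin] with x hmax hmin using le_antisymm hmax hmin
  have hzero : deriv (deriv f) a = 0 := by
    rw [hconst.deriv.deriv_eq]
    simp
  linarith

theorem isLocalMax_log_sub_log_of_eventually_le {α : Type*} [TopologicalSpace α] {f g : α → ℝ}
    {x : α} (hle : ∀ᶠ y in 𝓝 x, f y ≤ g y) (heq : f x = g x) (hf : ContinuousAt f x)
    (hpos : 0 < f x) : IsLocalMax (fun y => Real.log (f y) - Real.log (g y)) x := by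
  filter_upwards [hle, hf.eventually (lt_mem_nhds hpos)] with y hy hposy
  rw [heq, sub_self]
  linarith [Real.log_le_log hposy hy]

theorem IsLocalMax.isLocalMaxOn_sphere {E : Type*} [NormedAddCommGroup E] {φ : E → ℝ}
    {g : ℝ → ℝ} {x : E} (h : IsLocalMax (fun y => φ y - g ‖y‖) x) :
    IsLocalMaxOn φ (Metric.sphere 0 ‖x‖) x := by
  filter_upwards [nhdsWithin_le_nhds h, self_mem_nhdsWithin] with y hy hsphere
  rw [mem_sphere_zero_iff_norm.1 hsphere] at hy
  linarith

section NormedSpace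

variable {E : Type*} [NormedAddCommGroup E] [NormedSpace ℝ E]

theorem IsLocalMax.secondDeriv_comp_nonpos {φ : E → ℝ} {φ' : E → E →L[ℝ] ℝ}
    {φ'' : E →L[ℝ] E →L[ℝ] ℝ} {γ γ' : ℝ → E} {a : E} (h : IsLocalMax (φ ∘ γ) 0)
    (hφ : ∀ᶠ y in 𝓝 (γ 0), HasFDerivAt φ (φ' y) y) (hφ' : HasFDerivAt φ' φ'' (γ 0))
    (hγ : ∀ t, HasDerivAt γ (γ' t) t) (hγ' : HasDerivAt γ' a 0) :
    φ'' (γ' 0) (γ' 0) + φ' (γ 0) a ≤ 0 := by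
  have hd : ∀ᶠ t in 𝓝 0, HasDerivAt (φ ∘ γ) (φ' (γ t) (γ' t)) t :=
    ((hγ 0).continuousAt.eventually hφ).mono fun t ht => ht.comp_hasDerivAt t (hγ t)
  have hdd : HasDerivAt (fun t => φ' (γ t) (γ' t)) (φ'' (γ' 0) (γ' 0) + φ' (γ 0) a) 0 :=
    (hφ'.comp_hasDerivAt 0 (hγ 0)).clm_apply hγ'
  have hderiv : deriv (φ ∘ γ) =ᶠ[𝓝 0] fun t => φ' (γ t) (γ' t) := hd.mono fun t ht => ht.deriv
  rw [← hdd.deriv, ← hderiv.deriv_eq]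
  exact h.deriv_deriv_nonpos hd.self_of_nhds.continuousAt

theorem IsLocalMax.radial_fderiv_mem_Icc {ψ : E → ℝ} {ψ' : E →L[ℝ] ℝ} {V : ℝ → ℝ} {e : E}
    {r dL dR : ℝ} (h : IsLocalMax (fun y => ψ y - V ‖y‖) (r • e)) (he : ‖e‖ = 1) (hr : 0 < r)
    (hψ : HasFDerivAt ψ ψ' (r • e)) (hL : HasDerivWithinAt V dL (Iic r) r)
    (hR : HasDerivWithinAt V dR (Ici r) r) : ψ' e ∈ Icc dL dR := by
  have hray : IsLocalMax (fun t : ℝ => ψ (t • e) - V t) r := by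
    refine (h.comp_continuous (b := r) (g := fun t : ℝ => t • e)
      (continuous_id.smul continuous_const).continuousAt).congr ?_
    filter_upwards [eventually_gt_nhds hr] with t ht
    simp [norm_smul, he, abs_of_pos ht]
  have hd : HasDerivAt (fun t : ℝ => ψ (t • e)) (ψ' e) r :=
    hψ.comp_hasDerivAt r (by simpa using (hasDerivAt_id r).smul_const e)
  constructor
  · linarith [hray.hasDerivWithinAt_Iic_nonneg (hd.hasDerivWithinAt.sub hL)]
  · linarith [hray.hasDerivWithinAt_Ici_nonpos (hd.hasDerivWithinAt.sub hR)]

end NormedSpace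

section InnerProductSpace

variable {E : Type*} [NormedAddCommGroup E] [InnerProductSpace ℝ E]

theorem posSemidef_smul_one_sub_of_orthonormal {ι : Type*} [Fintype ι] [DecidableEq ι]
    {B : E →L[ℝ] E →L[ℝ] ℝ} (hB : ∀ x y, B x y = B y x) {f : ι → E} (hf : Orthonormal ℝ f)
    {c : ℝ} (h : ∀ v : ι → ℝ, B (∑ i, v i • f i) (∑ i, v i • f i) ≤ c * ‖∑ i, v i • f i‖ ^ 2) :
    (c • 1 - Matrix.of fun i j => B (f i) (f j)).PosSemidef := by
  refine .of_dotProduct_mulVec_nonneg ?_ fun v => ?_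
  · ext i j
    simp [Matrix.one_apply, hB (f i), eq_comm]
  have hnorm : ‖∑ i, v i • f i‖ ^ 2 = ∑ i, v i * v i := by
    rw [← real_inner_self_eq_norm_sq, hf.inner_sum]
    simp
  have hB' : B (∑ i, v i • f i) (∑ i, v i • f i) = ∑ j, ∑ i, v j * (v i * B (f i) (f j)) := by
    simp [map_sum, map_smul, Finset.mul_sum]
  have hdiag : ∑ x, ∑ i, v x * ((if x = i then c else 0) * v i) = c * ∑ i, v i * v i := by
    simp [ite_mul, mul_ite, Finset.mul_sum, mul_left_comm]
  have hoff : ∑ x, ∑ i, v x * (B (f x) (f i) * v i) = ∑ j, ∑ i, v j * (v i * B (f i) (f j)) := by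
    refine Finset.sum_congr rfl fun x _ => Finset.sum_congr rfl fun i _ => ?_
    rw [hB]
    ring
  have hquad := h v
  rw [hnorm, hB'] at hquad
  simp only [dotProduct, Pi.star_apply, star_trivial, Matrix.mulVec, Matrix.sub_apply,
    Matrix.smul_apply, Matrix.one_apply, smul_eq_mul, mul_ite, mul_one, mul_zero, Matrix.of_apply,
    Finset.mul_sum]
  simp only [sub_mul, mul_sub, Finset.sum_sub_distrib, hdiag, hoff]
  linarith

noncomputable def greatCircle (x v : E) (t : ℝ) : E := Real.cos t • x + Real.sin t • v

@[simp]
theorem greatCircle_zero (x v : E) : greatCircle x v 0 = x := by simp [greatCircle]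

theorem hasDerivAt_greatCircle (x v : E) (t : ℝ) :
    HasDerivAt (greatCircle x v) (greatCircle v (-x) t) t := by
  have := ((Real.hasDerivAt_cos t).smul_const x).add ((Real.hasDerivAt_sin t).smul_const v)
  rwa [show greatCircle v (-x) t = -Real.sin t • x + Real.cos t • v by
    rw [greatCircle, smul_neg, neg_smul, add_comm]]

theorem norm_greatCircle {x v : E} (hxv : ⟪x, v⟫ = 0) (hv : ‖v‖ = ‖x‖) (t : ℝ) :
    ‖greatCircle x v t‖ = ‖x‖ := by
  have hsq : ‖greatCircle x v t‖ ^ 2 = ‖x‖ ^ 2 := by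
    rw [greatCircle, norm_add_sq_real, real_inner_smul_left, real_inner_smul_right, hxv,
      norm_smul, norm_smul, hv, Real.norm_eq_abs, Real.norm_eq_abs]
    nlinarith [Real.sin_sq_add_cos_sq t, sq_abs (Real.sin t), sq_abs (Real.cos t)]
  exact (pow_left_inj₀ (norm_nonneg _) (norm_nonneg _) two_ne_zero).1 hsq

theorem norm_smul_norm_div_norm (x : E) {w : E} (hw : w ≠ 0) : ‖(‖x‖ / ‖w‖) • w‖ = ‖x‖ := by
  rw [norm_smul, Real.norm_eq_abs, abs_of_nonneg (by positivity),
    div_mul_cancel₀ _ (norm_ne_zero_iff.2 hw)]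

variable {φ : E → ℝ} {x : E}

theorem IsLocalMaxOn.comp_greatCircle {v : E} (h : IsLocalMaxOn φ (Metric.sphere 0 ‖x‖) x)
    (hxv : ⟪x, v⟫ = 0) (hv : ‖v‖ = ‖x‖) : IsLocalMax (φ ∘ greatCircle x v) 0 := by
  rw [← isLocalMaxOn_univ_iff]
  refine IsLocalMaxOn.comp_continuousOn (by rwa [greatCircle_zero]) (fun t _ => ?_)
    (fun t _ => (hasDerivAt_greatCircle x v t).continuousAt.continuousWithinAt) (mem_univ 0)
  simp [norm_greatCircle hxv hv]

theorem IsLocalMaxOn.sphere_hasFDerivAt_eq_zero {φ' : E →L[ℝ] ℝ} {w : E}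
    (h : IsLocalMaxOn φ (Metric.sphere 0 ‖x‖) x) (hx : x ≠ 0) (hφ : HasFDerivAt φ φ' x)
    (hxw : ⟪x, w⟫ = 0) : φ' w = 0 := by
  rcases eq_or_ne w 0 with rfl | hw
  · exact map_zero φ'
  set c := ‖x‖ / ‖w‖
  have hc : c ≠ 0 := div_ne_zero (norm_ne_zero_iff.2 hx) (norm_ne_zero_iff.2 hw)
  have hmax := h.comp_greatCircle (v := c • w) (by rw [real_inner_smul_right, hxw, mul_zero])
    (norm_smul_norm_div_norm x hw)
  have hd : HasDerivAt (φ ∘ greatCircle x (c • w)) (φ' (c • w)) 0 := by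
    simpa using hφ.comp_hasDerivAt_of_eq 0 (hasDerivAt_greatCircle x (c • w) 0)
      (greatCircle_zero _ _).symm
  have hzero := hmax.hasDerivAt_eq_zero hd
  rw [map_smul, smul_eq_mul] at hzero
  exact (mul_eq_zero.1 hzero).resolve_left hc

theorem IsLocalMaxOn.sphere_hessian_le {φ' : E → E →L[ℝ] ℝ} {φ'' : E →L[ℝ] E →L[ℝ] ℝ} {w : E}
    (h : IsLocalMaxOn φ (Metric.sphere 0 ‖x‖) x) (hφ : ∀ᶠ y in 𝓝 x, HasFDerivAt φ (φ' y) y)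
    (hφ' : HasFDerivAt φ' φ'' x) (hxw : ⟪x, w⟫ = 0) :
    ‖x‖ ^ 2 * φ'' w w ≤ φ' x x * ‖w‖ ^ 2 := by
  rcases eq_or_ne w 0 with rfl | hw
  · simp
  rcases eq_or_ne x 0 with rfl | hx
  · simp
  set c := ‖x‖ / ‖w‖
  have hmax := h.comp_greatCircle (v := c • w) (by rw [real_inner_smul_right, hxw, mul_zero])
    (norm_smul_norm_div_norm x hw)
  have hsecond := hmax.secondDeriv_comp_nonpos (φ' := φ') (by rwa [greatCircle_zero])
    (by rwa [greatCircle_zero]) (hasDerivAt_greatCircle x (c • w))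
    (by simpa using hasDerivAt_greatCircle (c • w) (-x) 0)
  simp only [greatCircle_zero, map_smul, map_neg, smul_apply, smul_eq_mul] at hsecond
  have hc : ‖x‖ ^ 2 = c ^ 2 * ‖w‖ ^ 2 := by
    simp only [c, div_pow]
    field_simp
  calc ‖x‖ ^ 2 * φ'' w w = (c ^ 2 * φ'' w w) * ‖w‖ ^ 2 := by rw [hc]; ring
    _ ≤ φ' x x * ‖w‖ ^ 2 := by gcongr; linarith

theorem IsLocalMaxOn.posSemidef_sphere_hessian {ι : Type*} [Fintype ι] [DecidableEq ι]
    (h : IsLocalMaxOn φ (Metric.sphere 0 ‖x‖) x) (hx : x ≠ 0) (hφ : ContDiffAt ℝ 2 φ x)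
    {f : ι → E} (hf : Orthonormal ℝ f) (hfx : ∀ i, ⟪x, f i⟫ = 0) :
    ((fderiv ℝ φ x x / ‖x‖ ^ 2) • 1 -
      Matrix.of fun i j => fderiv ℝ (fderiv ℝ φ) x (f i) (f j)).PosSemidef := by
  have hev : ∀ᶠ y in 𝓝 x, HasFDerivAt φ (fderiv ℝ φ y) y :=
    (hφ.eventually (by simp)).mono fun y hy => (hy.differentiableAt two_ne_zero).hasFDerivAt
  have hφ' : HasFDerivAt (fderiv ℝ φ) (fderiv ℝ (fderiv ℝ φ) x) x :=
    ((hφ.fderiv_right le_rfl).differentiableAt one_ne_zero).hasFDerivAt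
  refine posSemidef_smul_one_sub_of_orthonormal
    (second_derivative_symmetric_of_eventually hev hφ') hf fun v => ?_
  have hxv : ⟪x, ∑ i, v i • f i⟫ = 0 := by
    simp [inner_sum, real_inner_smul_right, hfx]
  rw [div_mul_eq_mul_div, le_div_iff₀ (by positivity), mul_comm]
  exact h.sphere_hessian_le hev hφ' hxv

end InnerProductSpace

/-- first- and second-order conditions at a touching point on the sphere
`{|x| = √(ab)}` where the radial derivative of the radial function `u(x) = U(|x|)` jumps. -/
theorem stmt13 (n : ℕ) (hn : 3 ≤ n) (a b : ℝ) (ha : 0 < a) (hb : 0 < b)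
    (U : ℝ → ℝ) (hUpos : ∀ r, 0 < U r)
    -- one-sided derivatives of ln U at r = √(ab): −(n−2)/√(ab) from the left, 0 from the right
    (hleft : HasDerivWithinAt (fun r => Real.log (U r))
      (-((n : ℝ) - 2) / Real.sqrt (a * b)) (Set.Iic (Real.sqrt (a * b))) (Real.sqrt (a * b)))
    (hright : HasDerivWithinAt (fun r => Real.log (U r))
      (0 : ℝ) (Set.Ici (Real.sqrt (a * b))) (Real.sqrt (a * b)))
    (φ : EuclideanSpace ℝ (Fin n) → ℝ)
    (x₀ : EuclideanSpace ℝ (Fin n))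
    (hx₀ : x₀ = EuclideanSpace.single (⟨0, by omega⟩ : Fin n) (Real.sqrt (a * b)))
    (hφ : ContDiffAt ℝ 2 φ x₀)
    -- φ touches u(x) = U(|x|) from below at x₀
    (htouch : ∀ᶠ x in nhds x₀, φ x ≤ U ‖x‖)
    (heq : φ x₀ = U ‖x₀‖) :
    (-((n : ℝ) - 2) / Real.sqrt (a * b)
        ≤ fderiv ℝ (fun x => Real.log (φ x)) x₀
            (EuclideanSpace.single (⟨0, by omega⟩ : Fin n) 1)
      ∧ fderiv ℝ (fun x => Real.log (φ x)) x₀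
            (EuclideanSpace.single (⟨0, by omega⟩ : Fin n) 1) ≤ 0)
    ∧ (∀ j : Fin n, j ≠ (⟨0, by omega⟩ : Fin n) →
        fderiv ℝ (fun x => Real.log (φ x)) x₀ (EuclideanSpace.single j 1) = 0)
    -- negative semidefiniteness, expressed as positive semidefiniteness of the negation
    ∧ Matrix.PosSemidef (-(Matrix.of fun i j : {i : Fin n // i ≠ (⟨0, by omega⟩ : Fin n)} =>
        fderiv ℝ (fun y => fderiv ℝ φ y (EuclideanSpace.single (j : Fin n) 1)) x₀
            (EuclideanSpace.single (i : Fin n) 1)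
          - (1 / Real.sqrt (a * b)) *
              fderiv ℝ φ x₀ (EuclideanSpace.single (⟨0, by omega⟩ : Fin n) 1) *
              (if i = j then (1 : ℝ) else 0))) := by
  set i₀ : Fin n := ⟨0, by omega⟩
  set r₀ := √(a * b)
  have hr₀ : 0 < r₀ := Real.sqrt_pos.2 (mul_pos ha hb)
  have hx₀e : x₀ = r₀ • EuclideanSpace.single i₀ 1 := by
    rw [hx₀]
    ext k
    simp
  have hnorm : ‖x₀‖ = r₀ := by simp [hx₀, hr₀.le]
  have hx₀ne : x₀ ≠ 0 := norm_ne_zero_iff.1 (hnorm ▸ hr₀.ne')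
  have hperp (j : Fin n) (hj : j ≠ i₀) : ⟪x₀, EuclideanSpace.single j 1⟫ = 0 := by
    simp [hx₀, EuclideanSpace.inner_single_left, hj]
  have hφx₀ : 0 < φ x₀ := heq ▸ hUpos _
  have hlogmax : IsLocalMax (fun x => Real.log (φ x) - Real.log (U ‖x‖)) x₀ :=
    isLocalMax_log_sub_log_of_eventually_le htouch heq hφ.continuousAt hφx₀
  have hsphere : IsLocalMaxOn φ (Metric.sphere 0 ‖x₀‖) x₀ :=
    IsLocalMax.isLocalMaxOn_sphere (g := U) (by filter_upwards [htouch] with x hx; linarith)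
  have hdφ : HasFDerivAt φ (fderiv ℝ φ x₀) x₀ := (hφ.differentiableAt two_ne_zero).hasFDerivAt
  have hlog : HasFDerivAt (fun x => Real.log (φ x)) ((φ x₀)⁻¹ • fderiv ℝ φ x₀) x₀ :=
    hdφ.log hφx₀.ne'
  refine ⟨?_, fun j hj => ?_, ?_⟩
  · have := (hx₀e ▸ hlogmax).radial_fderiv_mem_Icc (by simp) hr₀ (hx₀e ▸ hlog) hleft hright
    rwa [← hx₀e, ← hlog.fderiv] at this
  · rw [hlog.fderiv, smul_apply, hsphere.sphere_hasFDerivAt_eq_zero hx₀ne hdφ (hperp j hj),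
      smul_zero]
  · have hradial : fderiv ℝ φ x₀ x₀ / ‖x₀‖ ^ 2 =
        1 / r₀ * fderiv ℝ φ x₀ (EuclideanSpace.single i₀ 1) := by
      rw [hnorm, hx₀e, map_smul, smul_eq_mul, ← hx₀e]
      field_simp
    have hdφ' := (hφ.fderiv_right le_rfl).differentiableAt one_ne_zero
    convert hsphere.posSemidef_sphere_hessian hx₀ne hφ
      (EuclideanSpace.orthonormal_single.comp _ Subtype.val_injective)
      (fun i : {i // i ≠ i₀} => hperp i i.2) using 1
    ext i j
    simp [fderiv_clm_apply hdφ' (differentiableAt_const _), Matrix.one_apply, hradial]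
end

section
/- Let n ≥ 3, 2 ≤ k ≤ n, p ∈ ℝ, q < −1 and c = H(p,q) := e^{(2k−n)p}(1−q²)ᵏ − (−1)ᵏ e^{−np} with (−1)ᵏ c < 0. For a maximal C² solution ξ of the ODE e^{2kξ}(1−|ξ'|²)^{k−1}[ξ'' + ((n−2k)/(2k))(1−|ξ'|²)] = (−1)ᵏ n/(2k) with ξ(0)=p, ξ'(0)=q on (T̲, T̄) with ξ' < −1 throughout and lim_{t→T̄⁻} ξ(t) = −∞, the blow-down time satisfies T̄ = ∫_{−∞}^{p} {1 + e^{−2s}[1 − |c| e^{ns}]^{1/k}}^{−1/2} ds. -/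
open Real MeasureTheory Filter

/-!
Along a solution the first integral `H(ξ, ξ')` is conserved: its time derivative is
`−2k ξ' e^{−nξ}` times the defect of the ODE. When `(−1)ᵏ H < 0`, the equation `H(ξ, ξ') = c`
can be solved for the velocity, `ξ' = −1 / g(ξ)` with `g` the integrand of the claimed formula.
Hence `G(ξ(t)) + t` is constant, where `G(x) = ∫_{−∞}^x g`, and letting `t → T̄⁻`, where
`ξ → −∞` and so `G(ξ) → 0`, gives `T̄ = G(p)`.
-/

open Set Topology

theorem hasDerivAt_Hfun_comp_eq_zero {n k : ℕ} (hk : k ≠ 0) {X V : ℝ → ℝ} {t z : ℝ}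
    (hX : HasDerivAt X (V t) t) (hV : HasDerivAt V z t)
    (hode : exp (2 * k * X t) * (1 - V t ^ 2) ^ (k - 1) *
        (z + (((n : ℝ) - 2 * k) / (2 * k)) * (1 - V t ^ 2)) = (-1 : ℝ) ^ k * n / (2 * k)) :
    HasDerivAt (fun s => Hfun n k (X s) (V s)) 0 t := by
  have hD : HasDerivAt (fun s => Hfun n k (X s) (V s)) _ t :=
    (((hX.const_mul (2 * (k : ℝ) - n)).exp).mul (((hV.pow 2).const_sub 1).pow k)).sub
      (((hX.const_mul (-(n : ℝ))).exp).const_mul ((-1 : ℝ) ^ k))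
  refine hD.congr_deriv ?_
  have hK : (k : ℝ) ≠ 0 := by exact_mod_cast hk
  have hexp : exp ((2 * (k : ℝ) - n) * X t) = exp (2 * k * X t) * exp (-(n : ℝ) * X t) := by
    rw [← exp_add]; ring_nf
  rw [hexp]
  obtain ⟨j, rfl⟩ := Nat.exists_eq_add_one_of_ne_zero hk
  simp only [Pi.pow_apply, Nat.add_sub_cancel, Nat.cast_ofNat] at hode ⊢
  field_simp at hode
  linear_combination -(V t * exp (-(n : ℝ) * X t)) * hode

theorem Hfun_comp_eq_of_ode {n k : ℕ} (hk : k ≠ 0) {X V Z : ℝ → ℝ} {a b : ℝ}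
    (hX : ∀ t ∈ Ioo a b, HasDerivAt X (V t) t) (hV : ∀ t ∈ Ioo a b, HasDerivAt V (Z t) t)
    (hode : ∀ t ∈ Ioo a b, exp (2 * k * X t) * (1 - V t ^ 2) ^ (k - 1) *
        (Z t + (((n : ℝ) - 2 * k) / (2 * k)) * (1 - V t ^ 2)) = (-1 : ℝ) ^ k * n / (2 * k))
    {s t : ℝ} (hs : s ∈ Ioo a b) (ht : t ∈ Ioo a b) :
    Hfun n k (X s) (V s) = Hfun n k (X t) (V t) := by
  have hH : ∀ u ∈ Ioo a b, HasDerivAt (fun s => Hfun n k (X s) (V s)) 0 u := fun u hu =>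
    hasDerivAt_Hfun_comp_eq_zero hk (hX u hu) (hV u hu) (hode u hu)
  exact isOpen_Ioo.is_const_of_deriv_eq_zero isPreconnected_Ioo
    (fun u hu => (hH u hu).differentiableAt.differentiableWithinAt) (fun u hu => (hH u hu).deriv)
    hs ht

theorem neg_one_pow_mul_Hfun (n k : ℕ) (x y : ℝ) :
    (-1 : ℝ) ^ k * Hfun n k x y = exp (-(n : ℝ) * x) * ((exp (2 * x) * (y ^ 2 - 1)) ^ k - 1) := by
  have hexp : exp ((2 * (k : ℝ) - n) * x) = exp (2 * x) ^ k * exp (-(n : ℝ) * x) := by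
    rw [← exp_nat_mul, ← exp_add]; ring_nf
  have hsq : ((-1 : ℝ) ^ k) ^ 2 = 1 := by rw [← pow_mul, pow_mul']; simp
  rw [Hfun, hexp, mul_pow, show y ^ 2 - 1 = -1 * (1 - y ^ 2) by ring, mul_pow]
  linear_combination (-exp (-(n : ℝ) * x)) * hsq

theorem one_sub_abs_Hfun_mul_exp {n k : ℕ} {x y : ℝ} (hH : (-1 : ℝ) ^ k * Hfun n k x y < 0) :
    1 - |Hfun n k x y| * exp (n * x) = (exp (2 * x) * (y ^ 2 - 1)) ^ k := by
  have habs : |Hfun n k x y| = -((-1 : ℝ) ^ k * Hfun n k x y) := by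
    rw [← abs_of_neg hH, abs_mul, abs_pow, abs_neg, abs_one, one_pow, one_mul]
  rw [habs, neg_one_pow_mul_Hfun, neg_mul, neg_mul, sub_neg_eq_add, mul_right_comm, ← exp_add]
  simp

noncomputable def blowDownIntegrand (n k : ℕ) (a s : ℝ) : ℝ :=
  (1 + exp (-2 * s) * (1 - a * exp (n * s)) ^ ((1 : ℝ) / k)) ^ (-(1 : ℝ) / 2)

theorem blowDownIntegrand_abs_Hfun {n k : ℕ} (hk : k ≠ 0) {x y : ℝ} (hy : y ≤ -1)
    (hH : (-1 : ℝ) ^ k * Hfun n k x y < 0) :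
    blowDownIntegrand n k |Hfun n k x y| x = (-y)⁻¹ := by
  have hy2 : 0 ≤ y ^ 2 - 1 := by nlinarith
  have hroot : ((exp (2 * x) * (y ^ 2 - 1)) ^ k) ^ ((1 : ℝ) / k) = exp (2 * x) * (y ^ 2 - 1) := by
    rw [one_div, pow_rpow_inv_natCast (by positivity) hk]
  have hsq : 1 + exp (-2 * x) * (exp (2 * x) * (y ^ 2 - 1)) = y ^ 2 := by
    rw [← mul_assoc, ← exp_add]; simp
  rw [blowDownIntegrand, one_sub_abs_Hfun_mul_exp hH, hroot, hsq, neg_div,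
    rpow_neg (sq_nonneg y), ← sqrt_eq_rpow, sqrt_sq_eq_abs, abs_of_neg (by linarith)]

section Integrand

variable {n k : ℕ} {a : ℝ}

theorem one_sub_mul_exp_antitone (ha : 0 ≤ a) : Antitone fun s : ℝ => 1 - a * exp (n * s) :=
  fun s x hsx => by
    have := exp_le_exp.mpr (mul_le_mul_of_nonneg_left hsx (Nat.cast_nonneg n))
    dsimp only
    nlinarith

theorem blowDownIntegrand_pos {s : ℝ} (hs : 0 < 1 - a * exp (n * s)) :
    0 < blowDownIntegrand n k a s :=
  rpow_pos_of_pos (by positivity) _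

theorem continuousAt_blowDownIntegrand {s : ℝ} (hs : 0 < 1 - a * exp (n * s)) :
    ContinuousAt (blowDownIntegrand n k a) s := by
  have hroot : ContinuousAt (fun s : ℝ => (1 - a * exp (n * s)) ^ ((1 : ℝ) / k)) s :=
    ContinuousAt.rpow_const (by fun_prop) (Or.inl hs.ne')
  exact ContinuousAt.rpow_const (by fun_prop) (Or.inl (by positivity))

theorem blowDownIntegrand_le_mul_exp (ha : 0 ≤ a) {s x : ℝ} (hx : 0 < 1 - a * exp (n * x))
    (hsx : s ≤ x) :
    blowDownIntegrand n k a s ≤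
      ((1 - a * exp (n * x)) ^ ((1 : ℝ) / k)) ^ (-(1 : ℝ) / 2) * exp s := by
  set D := (1 - a * exp (n * x)) ^ ((1 : ℝ) / k)
  have hD : 0 < D := rpow_pos_of_pos hx _
  have hDs : D ≤ (1 - a * exp (n * s)) ^ ((1 : ℝ) / k) :=
    rpow_le_rpow hx.le (one_sub_mul_exp_antitone ha hsx) (by positivity)
  calc blowDownIntegrand n k a s ≤ (exp (-2 * s) * D) ^ (-(1 : ℝ) / 2) := by
        refine rpow_le_rpow_of_nonpos (by positivity) ?_ (by norm_num)
        nlinarith [exp_pos (-2 * s)]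
    _ = D ^ (-(1 : ℝ) / 2) * exp s := by
        rw [mul_rpow (exp_pos _).le hD.le, ← exp_mul, mul_comm]
        ring_nf

theorem integrableOn_blowDownIntegrand_Iic (ha : 0 ≤ a) {x : ℝ}
    (hx : 0 < 1 - a * exp (n * x)) : IntegrableOn (blowDownIntegrand n k a) (Iic x) := by
  have hpos : ∀ s ∈ Iic x, 0 < 1 - a * exp (n * s) := fun s hs =>
    hx.trans_le (one_sub_mul_exp_antitone ha hs)
  refine ((integrableOn_exp_Iic x).const_mul
    (((1 - a * exp (n * x)) ^ ((1 : ℝ) / k)) ^ (-(1 : ℝ) / 2))).mono' ?_ ?_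
  · exact ContinuousOn.aestronglyMeasurable (fun s hs =>
      (continuousAt_blowDownIntegrand (hpos s hs)).continuousWithinAt) measurableSet_Iic
  · filter_upwards [ae_restrict_mem measurableSet_Iic] with s hs
    rw [norm_of_nonneg (blowDownIntegrand_pos (hpos s hs)).le]
    exact blowDownIntegrand_le_mul_exp ha hx hs

end Integrand

theorem hasDerivAt_integral_Iic {g : ℝ → ℝ} {x : ℝ}
    (hint : ∀ᶠ y in 𝓝 x, IntegrableOn g (Iic y)) (hg : ContinuousAt g x) :
    HasDerivAt (fun y => ∫ s in Iic y, g s) (g x) x := by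
  obtain ⟨b, hb, hxb⟩ :=
    ((hint.filter_mono nhdsWithin_le_nhds).and (self_mem_nhdsWithin (s := Ioi x))).exists
  have hmeas : StronglyMeasurableAtFilter g (𝓝 x) :=
    ⟨Iic b, Iic_mem_nhds hxb, hb.aestronglyMeasurable⟩
  refine ((intervalIntegral.integral_hasDerivAt_right (a := x) (by simp) hmeas hg).const_add
    (∫ s in Iic x, g s)).congr_of_eventuallyEq ?_
  filter_upwards [hint] with y hy
  rw [← intervalIntegral.integral_Iic_sub_Iic hint.self_of_nhds hy]
  ring

theorem hasDerivAt_integral_Iic_blowDownIntegrand {n k : ℕ} {a x : ℝ} (ha : 0 ≤ a)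
    (hx : 0 < 1 - a * exp (n * x)) :
    HasDerivAt (fun y => ∫ s in Iic y, blowDownIntegrand n k a s) (blowDownIntegrand n k a x) x :=
  hasDerivAt_integral_Iic
    ((continuousAt_const.eventually_lt (g := fun y => 1 - a * exp (n * y)) (by fun_prop) hx).mono
      fun _ hy =>
      integrableOn_blowDownIntegrand_Iic ha hy)
    (continuousAt_blowDownIntegrand hx)

theorem eq_of_hasDerivAt_neg_one_of_tendsto {F : ℝ → ℝ} {a b : ℝ} (ha : a < 0) (hb : 0 < b)
    (hF : ∀ t ∈ Ioo a b, HasDerivAt F (-1) t) (hlim : Tendsto F (𝓝[<] b) (𝓝 0)) :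
    b = F 0 := by
  have hline : ∀ t, HasDerivAt (fun t => F 0 - t) (-1) t := fun t =>
    (hasDerivAt_id t).const_sub (F 0)
  have hEq : EqOn F (fun t => F 0 - t) (Ioo a b) :=
    isOpen_Ioo.eqOn_of_deriv_eq isPreconnected_Ioo
      (fun t ht => (hF t ht).differentiableAt.differentiableWithinAt)
      (fun t _ => (hline t).differentiableAt.differentiableWithinAt)
      (fun t ht => (hF t ht).deriv.trans (hline t).deriv.symm) ⟨ha, hb⟩ (sub_zero _).symm
  have hlim' : Tendsto F (𝓝[<] b) (𝓝 (F 0 - b)) :=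
    ((continuous_sub_left (F 0)).tendsto b |>.mono_left nhdsWithin_le_nhds).congr'
      (eventuallyEq_of_mem (Ioo_mem_nhdsLT (ha.trans hb)) hEq.symm)
  linarith [tendsto_nhds_unique hlim hlim']

theorem stmt15_general (n k : ℕ) (hk2 : 2 ≤ k)
    (p q c : ℝ) (hc : c = Hfun n k p q)
    (hsign : (-1 : ℝ) ^ k * c < 0)
    (Tlow Thigh : ℝ) (hTlow : Tlow < 0) (hThigh : 0 < Thigh)
    (ξ ξ' ξ'' : ℝ → ℝ)
    (hderiv1 : ∀ t ∈ Set.Ioo Tlow Thigh, HasDerivAt ξ (ξ' t) t)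
    (hderiv2 : ∀ t ∈ Set.Ioo Tlow Thigh, HasDerivAt ξ' (ξ'' t) t)
    (hval : ξ 0 = p) (hval' : ξ' 0 = q)
    (hlt : ∀ t ∈ Set.Ioo Tlow Thigh, ξ' t < -1)
    (hODE : ∀ t ∈ Set.Ioo Tlow Thigh,
      Real.exp (2 * k * ξ t) * (1 - (ξ' t) ^ 2) ^ (k - 1) *
          (ξ'' t + (((n : ℝ) - 2 * k) / (2 * k)) * (1 - (ξ' t) ^ 2))
        = (-1 : ℝ) ^ k * n / (2 * k))
    (hblow : Tendsto ξ (nhdsWithin Thigh (Set.Iio Thigh)) atBot) :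
    Thigh = ∫ s in Set.Iio p,
      (1 + Real.exp (-2 * s) * (1 - |c| * Real.exp ((n : ℝ) * s)) ^ ((1 : ℝ) / k))
        ^ (-(1 : ℝ) / 2) := by
  have hk : k ≠ 0 := by omega
  have hH : ∀ t ∈ Ioo Tlow Thigh, Hfun n k (ξ t) (ξ' t) = c := fun t ht => by
    rw [hc, ← hval, ← hval']
    exact Hfun_comp_eq_of_ode hk hderiv1 hderiv2 hODE ht ⟨hTlow, hThigh⟩
  have hsignξ : ∀ t ∈ Ioo Tlow Thigh, (-1 : ℝ) ^ k * Hfun n k (ξ t) (ξ' t) < 0 := fun t ht => by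
    rwa [hH t ht]
  have hGξ : ∀ t ∈ Ioo Tlow Thigh,
      HasDerivAt (fun t => ∫ s in Iic (ξ t), blowDownIntegrand n k |c| s) (-1) t := by
    intro t ht
    have hslope := hlt t ht
    have hpos : 0 < 1 - |c| * exp (n * ξ t) := by
      rw [← hH t ht, one_sub_abs_Hfun_mul_exp (hsignξ t ht)]
      exact pow_pos (mul_pos (exp_pos _) (by nlinarith)) k
    refine ((hasDerivAt_integral_Iic_blowDownIntegrand (abs_nonneg c) hpos).comp t
      (hderiv1 t ht)).congr_deriv ?_
    rw [← hH t ht, blowDownIntegrand_abs_Hfun hk hslope.le (hsignξ t ht)]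
    have hne : ξ' t ≠ 0 := by linarith
    field_simp
  rw [eq_of_hasDerivAt_neg_one_of_tendsto hTlow hThigh hGξ
    ((tendsto_integral_Iic_zero tendsto_id).comp hblow), hval, integral_Iic_eq_integral_Iio]
  rfl

/-- for a `C²` solution `ξ` of the ODE on `(T̲, T̄)` with `ξ(0) = p`, `ξ'(0) = q`,
`q < −1`, `ξ' < −1` throughout, first-integral value `c = H(p,q)` with `(−1)ᵏ c < 0`, and
blow-down `ξ(t) → −∞` as `t → T̄⁻`, the blow-down time satisfies
`T̄ = ∫_{−∞}^{p} {1 + e^{−2s}[1 − |c| e^{ns}]^{1/k}}^{−1/2} ds`. -/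
theorem stmt15 (n k : ℕ) (hn : 3 ≤ n) (hk2 : 2 ≤ k) (hkn : k ≤ n)
    (p q c : ℝ) (hq : q < -1) (hc : c = Hfun n k p q)
    (hsign : (-1 : ℝ) ^ k * c < 0)
    (Tlow Thigh : ℝ) (hTlow : Tlow < 0) (hThigh : 0 < Thigh)
    (ξ ξ' ξ'' : ℝ → ℝ)
    (hderiv1 : ∀ t ∈ Set.Ioo Tlow Thigh, HasDerivAt ξ (ξ' t) t)
    (hderiv2 : ∀ t ∈ Set.Ioo Tlow Thigh, HasDerivAt ξ' (ξ'' t) t)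
    (hval : ξ 0 = p) (hval' : ξ' 0 = q)
    (hlt : ∀ t ∈ Set.Ioo Tlow Thigh, ξ' t < -1)
    (hODE : ∀ t ∈ Set.Ioo Tlow Thigh,
      Real.exp (2 * k * ξ t) * (1 - (ξ' t) ^ 2) ^ (k - 1) *
          (ξ'' t + (((n : ℝ) - 2 * k) / (2 * k)) * (1 - (ξ' t) ^ 2))
        = (-1 : ℝ) ^ k * n / (2 * k))
    (hblow : Tendsto ξ (nhdsWithin Thigh (Set.Iio Thigh)) atBot) :
    Thigh = ∫ s in Set.Iio p,
      (1 + Real.exp (-2 * s) * (1 - |c| * Real.exp ((n : ℝ) * s)) ^ ((1 : ℝ) / k))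
        ^ (-(1 : ℝ) / 2) :=
  stmt15_general n k hk2 p q c hc hsign Tlow Thigh hTlow hThigh ξ ξ' ξ'' hderiv1 hderiv2 hval hval'
    hlt hODE hblow
end

section
/- Let n ≥ 3, 2 ≤ k ≤ n, and let ξ solve ξ' = −{1 + e^{−2ξ}[1 + (−1)ᵏ c e^{nξ}]^{1/k}}^{1/2} on (T̲, T̄) with (−1)ᵏ c < 0 and ξ(t) → ξ₀ := −(1/n)ln|c| and ξ'(t) → −1 as t → T̲⁺. Then (t − T̲)^{(k−1)/k} ξ''(t) converges to a finite negative limit as t → T̲⁺; consequently ξ extends to a C^{1,1/k} function on [T̲, T̄) but does not extend to a C^{1,γ} function near T̲ for any γ > 1/k. -/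
/-!
Since `ξ' ≤ 0` and `ξ → ξ₀`, the solution stays below `ξ₀`, where the bracket
`B(ξ) = 1 - |c| e^{nξ}` is positive. Differentiating the equation `ξ' = Φ(ξ)` gives
`ξ'' = Φ'(ξ) ξ'`, and `B^{1-1/k} Φ'` has a finite positive limit at `ξ₀`, while
`B(ξ(t)) ~ n (t - T̲)` by l'Hôpital. Hence `(t - T̲)^{1-1/k} ξ''` tends to a negative limit.
Integrating `|ξ''| ≲ (t - T̲)^{1/k-1}` makes `ξ'` `1/k`-Hölder, and integrating
`ξ'' ≲ -(t - T̲)^{1/k-1}` near `T̲` gives `ξ'(T̲) - ξ'(t) ≳ (t - T̲)^{1/k}`, which excludes any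
larger exponent.
-/

open Real Filter Set Topology

section HolderAtEndpoint

variable {f f' : ℝ → ℝ} {a b p : ℝ}

lemma sub_le_sub_of_hasDerivAt_le {g g' : ℝ → ℝ} {s t : ℝ} (hst : s ≤ t)
    (hf : ContinuousOn f (Icc s t)) (hg : ContinuousOn g (Icc s t))
    (hf' : ∀ x ∈ Ioo s t, HasDerivAt f (f' x) x) (hg' : ∀ x ∈ Ioo s t, HasDerivAt g (g' x) x)
    (hle : ∀ x ∈ Ioo s t, f' x ≤ g' x) : f t - f s ≤ g t - g s := by
  rw [← interior_Icc] at hf' hg' hle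
  have hmono := monotoneOn_of_hasDerivWithinAt_nonneg (convex_Icc s t) (hg.sub hf)
    (fun x hx => ((hg' x hx).sub (hf' x hx)).hasDerivWithinAt)
    (fun x hx => sub_nonneg.2 (hle x hx))
  have := hmono (left_mem_Icc.2 hst) (right_mem_Icc.2 hst) hst
  simp only [Pi.sub_apply] at this
  linarith

lemma rpow_one_sub_mul_rpow_sub_one {y : ℝ} (hy : 0 < y) (p : ℝ) :
    y ^ (1 - p) * y ^ (p - 1) = 1 := by
  rw [← rpow_add hy, sub_add_sub_cancel', sub_self, rpow_zero]

lemma sub_le_of_rpow_mul_deriv_le (hp : 0 < p) {M s t : ℝ} (has : a ≤ s) (hst : s ≤ t)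
    (hf : ContinuousOn f (Icc s t)) (hf' : ∀ x ∈ Ioo s t, HasDerivAt f (f' x) x)
    (hbound : ∀ x ∈ Ioo s t, (x - a) ^ (1 - p) * f' x ≤ M) :
    f t - f s ≤ M / p * ((t - a) ^ p - (s - a) ^ p) := by
  have hφ : ∀ x ∈ Ioo s t,
      HasDerivAt (fun y => M / p * (y - a) ^ p) (M * (x - a) ^ (p - 1)) x := by
    intro x hx
    have hxa : 0 < x - a := by linarith [hx.1]
    refine ((((hasDerivAt_id' x).sub_const a).rpow_const (p := p) (Or.inl hxa.ne')).const_mul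
      (M / p)).congr_deriv ?_
    field_simp
  have hφc : ContinuousOn (fun y => M / p * (y - a) ^ p) (Icc s t) :=
    (continuous_const.mul
      ((continuous_id.sub continuous_const).rpow_const fun _ => Or.inr hp.le)).continuousOn
  have key := sub_le_sub_of_hasDerivAt_le hst hf hφc hf' hφ fun x hx => by
    have hxa : 0 < x - a := by linarith [hx.1]
    have hw : 0 < (x - a) ^ (p - 1) := rpow_pos_of_pos hxa _
    calc f' x = ((x - a) ^ (1 - p) * f' x) * (x - a) ^ (p - 1) := by
          rw [mul_comm _ (f' x), mul_assoc, rpow_one_sub_mul_rpow_sub_one hxa, mul_one]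
      _ ≤ M * (x - a) ^ (p - 1) := mul_le_mul_of_nonneg_right (hbound x hx) hw.le
  linarith

lemma abs_sub_le_of_abs_rpow_mul_deriv_le (hp : 0 < p) {M s t : ℝ} (has : a ≤ s) (hst : s ≤ t)
    (hf : ContinuousOn f (Icc s t)) (hf' : ∀ x ∈ Ioo s t, HasDerivAt f (f' x) x)
    (hbound : ∀ x ∈ Ioo s t, |(x - a) ^ (1 - p) * f' x| ≤ M) :
    |f t - f s| ≤ M / p * ((t - a) ^ p - (s - a) ^ p) := by
  have upper := sub_le_of_rpow_mul_deriv_le hp has hst hf hf' fun x hx =>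
    (abs_le.1 (hbound x hx)).2
  have lower := sub_le_of_rpow_mul_deriv_le (f := -f) (f' := -f') hp has hst hf.neg
    (fun x hx => (hf' x hx).neg) fun x hx => by
      have := (abs_le.1 (hbound x hx)).1
      simp only [Pi.neg_apply, mul_neg]
      linarith
  simp only [Pi.neg_apply] at lower
  exact abs_sub_le_iff.2 ⟨upper, by linarith⟩

lemma abs_sub_le_rpow_of_abs_rpow_mul_deriv_le (hp : 0 < p) (hp1 : p ≤ 1) {M : ℝ}
    (hM : 0 ≤ M) (hf : ContinuousOn f (Icc a b)) (hf' : ∀ x ∈ Ioo a b, HasDerivAt f (f' x) x)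
    (hbound : ∀ x ∈ Ioo a b, |(x - a) ^ (1 - p) * f' x| ≤ M) {s t : ℝ} (hs : s ∈ Icc a b)
    (ht : t ∈ Icc a b) : |f s - f t| ≤ M / p * |s - t| ^ p := by
  wlog hst : s ≤ t generalizing s t
  · rw [abs_sub_comm, abs_sub_comm s]
    exact this ht hs (le_of_not_ge hst)
  have hsubadd : (t - a) ^ p ≤ (t - s) ^ p + (s - a) ^ p := by
    simpa using rpow_add_le_add_rpow (sub_nonneg.2 hst) (sub_nonneg.2 hs.1) hp.le hp1
  have hIcc : Icc s t ⊆ Icc a b := Icc_subset_Icc hs.1 ht.2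
  have hIoo : Ioo s t ⊆ Ioo a b := Ioo_subset_Ioo hs.1 ht.2
  calc |f s - f t| = |f t - f s| := abs_sub_comm _ _
    _ ≤ M / p * ((t - a) ^ p - (s - a) ^ p) :=
      abs_sub_le_of_abs_rpow_mul_deriv_le hp hs.1 hst (hf.mono hIcc)
        (fun x hx => hf' x (hIoo hx)) fun x hx => hbound x (hIoo hx)
    _ ≤ M / p * |s - t| ^ p := by
      rw [abs_sub_comm, abs_of_nonneg (sub_nonneg.2 hst)]
      gcongr
      linarith

lemma exists_abs_le_of_continuousOn_Ioc_of_tendsto {φ : ℝ → ℝ} {l : ℝ}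
    (hφ : ContinuousOn φ (Ioc a b)) (hlim : Tendsto φ (𝓝[>] a) (𝓝 l)) :
    ∃ M, ∀ x ∈ Ioo a b, |φ x| ≤ M := by
  rcases le_or_gt b a with hba | hab
  · exact ⟨0, fun x hx => absurd (hx.1.trans hx.2) hba.not_gt⟩
  have hb : Tendsto φ (𝓝[<] b) (𝓝 (φ b)) := by
    rw [← nhdsWithin_Ioo_eq_nhdsLT hab]
    exact (hφ b (right_mem_Ioc.2 hab)).mono Ioo_subset_Ioc_self
  have hext := continuousOn_Icc_extendFrom_Ioo (hφ.mono Ioo_subset_Ioc_self) hlim hb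
  obtain ⟨M, hM⟩ := isCompact_Icc.exists_bound_of_continuousOn hext
  refine ⟨M, fun x hx => ?_⟩
  rw [← extendFrom_extends (hφ.mono Ioo_subset_Ioc_self) x hx]
  exact hM x (Ioo_subset_Icc_self hx)

lemma exists_abs_sub_le_of_tendsto_rpow_mul_deriv (hp : 0 < p) (hp1 : p ≤ 1) {L : ℝ}
    (hf : ContinuousOn f (Icc a b)) (hf' : ∀ x ∈ Ioo a b, HasDerivAt f (f' x) x)
    (hf'c : ContinuousOn f' (Ioc a b))
    (hlim : Tendsto (fun x => (x - a) ^ (1 - p) * f' x) (𝓝[>] a) (𝓝 L)) :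
    ∃ C, ∀ s ∈ Icc a b, ∀ t ∈ Icc a b, |f s - f t| ≤ C * |s - t| ^ p := by
  have hφ : ContinuousOn (fun x => (x - a) ^ (1 - p) * f' x) (Ioc a b) :=
    ((continuous_id.sub continuous_const).continuousOn.rpow_const
      fun x hx => Or.inl (sub_pos.2 hx.1).ne').mul hf'c
  obtain ⟨M, hM⟩ := exists_abs_le_of_continuousOn_Ioc_of_tendsto hφ hlim
  exact ⟨max M 0 / p, fun s hs t ht =>
    abs_sub_le_rpow_of_abs_rpow_mul_deriv_le hp hp1 (le_max_right M 0) hf hf'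
      (fun x hx => (hM x hx).trans (le_max_left M 0)) hs ht⟩

lemma exists_lt_abs_sub_of_tendsto_rpow_mul_deriv (hp : 0 < p) {γ L : ℝ} (hγ : p < γ)
    (hL : L < 0) (hab : a < b) (hf : ContinuousOn f (Icc a b))
    (hf' : ∀ x ∈ Ioo a b, HasDerivAt f (f' x) x)
    (hlim : Tendsto (fun x => (x - a) ^ (1 - p) * f' x) (𝓝[>] a) (𝓝 L)) (C : ℝ) :
    ∃ s ∈ Icc a b, ∃ t ∈ Icc a b, C * |s - t| ^ γ < |f s - f t| := by
  obtain ⟨m, hm, hsub⟩ := mem_nhdsGT_iff_exists_Ioo_subset.1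
    (hlim.eventually (gt_mem_nhds (show L < L / 2 by linarith)))
  have hsmall : Tendsto (fun t => C * (t - a) ^ (γ - p)) (𝓝[>] a) (𝓝 0) := by
    have h := ((continuous_sub_right a).tendsto a).rpow_const (p := γ - p)
      (Or.inr (sub_pos.2 hγ).le)
    rw [sub_self, zero_rpow (sub_pos.2 hγ).ne'] at h
    simpa using (h.mono_left nhdsWithin_le_nhds).const_mul C
  have hm' : ∀ᶠ t in 𝓝[>] a, t ∈ Ioo a m := Ioo_mem_nhdsGT hm
  have hb' : ∀ᶠ t in 𝓝[>] a, t ∈ Ioo a b := Ioo_mem_nhdsGT hab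
  have hgap : 0 < -(L / 2) / p := div_pos (by linarith) hp
  obtain ⟨t, htm, htb, hCt⟩ :=
    (hm'.and (hb'.and (hsmall.eventually (gt_mem_nhds hgap)))).exists
  have hta : 0 < t - a := sub_pos.2 htb.1
  have hdrop := sub_le_of_rpow_mul_deriv_le hp le_rfl htb.1.le
    (hf.mono (Icc_subset_Icc_right htb.2.le)) (fun x hx => hf' x ⟨hx.1, hx.2.trans htb.2⟩)
    fun x hx => (hsub ⟨hx.1, hx.2.trans htm.2⟩).le
  rw [sub_self, zero_rpow hp.ne', sub_zero] at hdrop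
  refine ⟨a, left_mem_Icc.2 hab.le, t, ⟨htb.1.le, htb.2.le⟩, ?_⟩
  calc C * |a - t| ^ γ = C * (t - a) ^ (γ - p) * (t - a) ^ p := by
        rw [abs_sub_comm, abs_of_pos hta, mul_assoc, ← rpow_add hta, sub_add_cancel]
    _ < -(L / 2) / p * (t - a) ^ p := mul_lt_mul_of_pos_right hCt (rpow_pos_of_pos hta p)
    _ = -(L / 2 / p * (t - a) ^ p) := by ring
    _ ≤ f a - f t := by linarith
    _ ≤ |f a - f t| := le_abs_self _

end HolderAtEndpoint

namespace RootODE

noncomputable section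

/-- The bracket of the equation: `c` stands for the paper's `(-1)ᵏ c`, and `p` below for `1/k`. -/
def base (c n x : ℝ) : ℝ := 1 + c * exp (n * x)

def radicand (c n p x : ℝ) : ℝ := 1 + exp (-2 * x) * base c n x ^ p

def rhs (c n p x : ℝ) : ℝ := -√(radicand c n p x)

def rhsDeriv (c n p x : ℝ) : ℝ :=
  -((exp (-2 * x) * -2 * base c n x ^ p
      + exp (-2 * x) * (c * n * exp (n * x) * p * base c n x ^ (p - 1)))
    / (2 * √(radicand c n p x)))

def ξ₀ (c n : ℝ) : ℝ := -(1 / n) * log |c|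

end

variable {c n p x : ℝ}

lemma mul_exp_ξ₀ (hc : c < 0) (hn : n ≠ 0) : c * exp (n * ξ₀ c n) = -1 := by
  rw [ξ₀, ← mul_assoc, mul_neg, mul_one_div_cancel hn, neg_one_mul, exp_neg,
    exp_log (abs_pos.2 hc.ne), abs_of_neg hc, inv_neg, mul_neg, mul_inv_cancel₀ hc.ne]

lemma base_ξ₀ (hc : c < 0) (hn : n ≠ 0) : base c n (ξ₀ c n) = 0 := by
  rw [base, mul_exp_ξ₀ hc hn, add_neg_cancel]

lemma strictAnti_base (hc : c < 0) (hn : 0 < n) : StrictAnti (base c n) := fun x y hxy => by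
  have := exp_lt_exp.2 (mul_lt_mul_of_pos_left hxy hn)
  unfold base
  nlinarith

lemma base_pos (hc : c < 0) (hn : 0 < n) (hx : x < ξ₀ c n) : 0 < base c n x := by
  simpa [base_ξ₀ hc hn.ne'] using strictAnti_base hc hn hx

lemma base_nonneg (hc : c < 0) (hn : 0 < n) (hx : x ≤ ξ₀ c n) : 0 ≤ base c n x := by
  simpa [base_ξ₀ hc hn.ne'] using (strictAnti_base hc hn).antitone hx

lemma rhs_nonpos : rhs c n p x ≤ 0 := neg_nonpos.2 (sqrt_nonneg _)

lemma one_le_radicand (hx : 0 ≤ base c n x) : 1 ≤ radicand c n p x :=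
  le_add_of_nonneg_right (mul_nonneg (exp_pos _).le (rpow_nonneg hx p))

lemma rhs_le_neg_one (hx : 0 ≤ base c n x) : rhs c n p x ≤ -1 := by
  simpa [rhs] using one_le_sqrt.2 (one_le_radicand (p := p) hx)

lemma radicand_ξ₀ (hc : c < 0) (hn : n ≠ 0) (hp : p ≠ 0) : radicand c n p (ξ₀ c n) = 1 := by
  simp [radicand, base_ξ₀ hc hn, zero_rpow hp]

lemma rhs_ξ₀ (hc : c < 0) (hn : n ≠ 0) (hp : p ≠ 0) : rhs c n p (ξ₀ c n) = -1 := by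
  simp [rhs, radicand_ξ₀ hc hn hp]

lemma hasDerivAt_base : HasDerivAt (base c n) (c * n * exp (n * x)) x :=
  ((((hasDerivAt_id' x).const_mul n).exp.const_mul c).const_add 1).congr_deriv (by ring)

lemma hasDerivAt_rhs (hx : 0 < base c n x) : HasDerivAt (rhs c n p) (rhsDeriv c n p x) x := by
  have hrad : HasDerivAt (radicand c n p) (exp (-2 * x) * -2 * base c n x ^ p
      + exp (-2 * x) * (c * n * exp (n * x) * p * base c n x ^ (p - 1))) x :=
    ((((hasDerivAt_id' x).const_mul (-2)).exp.congr_deriv (by ring)).mul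
      (hasDerivAt_base.rpow_const (Or.inl hx.ne'))).const_add 1
  exact (hrad.sqrt (one_pos.trans_le (one_le_radicand hx.le)).ne').neg

lemma continuous_base : Continuous (base c n) := by
  unfold base
  fun_prop

lemma continuousAt_radicand (h : base c n x ≠ 0 ∨ 0 ≤ p) :
    ContinuousAt (radicand c n p) x := by
  have hB := continuous_base (c := c) (n := n) |>.continuousAt (x := x)
  unfold radicand
  fun_prop (disch := exact h)

lemma continuousAt_rhsDeriv (hx : 0 < base c n x) : ContinuousAt (rhsDeriv c n p) x := by
  have hrad : 2 * √(radicand c n p x) ≠ 0 := by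
    have := one_le_sqrt.2 (one_le_radicand (p := p) hx.le)
    positivity
  have hB := continuous_base (c := c) (n := n) |>.continuousAt (x := x)
  have hR := continuousAt_radicand (p := p) (Or.inl hx.ne')
  unfold rhsDeriv
  fun_prop (disch := first | exact hrad | exact Or.inl hx.ne')

lemma base_rpow_one_sub_mul_rhsDeriv (hx : 0 < base c n x) :
    base c n x ^ (1 - p) * rhsDeriv c n p x =
      -(exp (-2 * x) * (-2 * base c n x + c * n * exp (n * x) * p)
        / (2 * √(radicand c n p x))) := by
  have h1 : base c n x ^ (1 - p) * base c n x ^ p = base c n x := by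
    rw [← rpow_add hx, sub_add_cancel, rpow_one]
  have h2 := rpow_one_sub_mul_rpow_sub_one hx p
  unfold rhsDeriv
  linear_combination (exp (-2 * x) / (2 * √(radicand c n p x))) *
    (2 * h1 - c * n * exp (n * x) * p * h2)

lemma tendsto_base_rpow_mul_rhsDeriv (hc : c < 0) (hn : 0 < n) (hp : 0 < p) :
    Tendsto (fun x => base c n x ^ (1 - p) * rhsDeriv c n p x) (𝓝[<] ξ₀ c n)
      (𝓝 (n * p * exp (-2 * ξ₀ c n) / 2)) := by
  have hq : ContinuousAt (fun x => -(exp (-2 * x) * (-2 * base c n x + c * n * exp (n * x) * p)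
      / (2 * √(radicand c n p x)))) (ξ₀ c n) := by
    have hB := continuous_base (c := c) (n := n) |>.continuousAt (x := ξ₀ c n)
    have hR := continuousAt_radicand (c := c) (n := n) (x := ξ₀ c n) (Or.inr hp.le)
    have h2 : 2 * √(radicand c n p (ξ₀ c n)) ≠ 0 := by simp [radicand_ξ₀ hc hn.ne' hp.ne']
    fun_prop (disch := exact h2)
  have hval : -(exp (-2 * ξ₀ c n) * (-2 * base c n (ξ₀ c n) + c * n * exp (n * ξ₀ c n) * p)
      / (2 * √(radicand c n p (ξ₀ c n)))) = n * p * exp (-2 * ξ₀ c n) / 2 := by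
    rw [base_ξ₀ hc hn.ne', radicand_ξ₀ hc hn.ne' hp.ne', mul_right_comm c, mul_exp_ξ₀ hc hn.ne',
      sqrt_one]
    ring
  refine (hval ▸ hq.tendsto.mono_left nhdsWithin_le_nhds).congr' ?_
  filter_upwards [self_mem_nhdsWithin] with x hx
  exact (base_rpow_one_sub_mul_rhsDeriv (base_pos hc hn hx)).symm

section Solution

variable {T T' : ℝ} {ξ ξ' ξ'' : ℝ → ℝ}

lemma lt_ξ₀_of_tendsto (hc : c < 0) (hn : 0 < n)
    (hξ : ∀ t ∈ Ioo T T', HasDerivAt ξ (ξ' t) t)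
    (hode : ∀ t ∈ Ioo T T', ξ' t = rhs c n p (ξ t))
    (hlim : Tendsto ξ (𝓝[>] T) (𝓝 (ξ₀ c n))) {t : ℝ} (ht : t ∈ Ioo T T') : ξ t < ξ₀ c n := by
  have hcont : ContinuousOn ξ (Ioo T T') := fun x hx =>
    (hξ x hx).continuousAt.continuousWithinAt
  have hderiv : ∀ x ∈ interior (Ioo T T'),
      HasDerivWithinAt ξ (ξ' x) (interior (Ioo T T')) x := by
    rw [interior_Ioo]
    exact fun x hx => (hξ x hx).hasDerivWithinAt
  have hanti : AntitoneOn ξ (Ioo T T') :=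
    antitoneOn_of_hasDerivWithinAt_nonpos (convex_Ioo T T') hcont hderiv fun x hx => by
      rw [interior_Ioo] at hx
      exact (hode x hx).trans_le rhs_nonpos
  have hle : ∀ s ∈ Ioo T T', ξ s ≤ ξ₀ c n := fun s hs => by
    refine ge_of_tendsto hlim ?_
    filter_upwards [Ioo_mem_nhdsGT hs.1] with r hr
    exact hanti ⟨hr.1, hr.2.trans hs.2⟩ hs hr.2.le
  -- once `ξ ≤ ξ₀` is known, the equation forces `ξ' ≤ -1`
  have hstrict : StrictAntiOn ξ (Ioo T T') :=
    strictAntiOn_of_hasDerivWithinAt_neg (convex_Ioo T T') hcont hderiv fun x hx => by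
      rw [interior_Ioo] at hx
      linarith [hode x hx, rhs_le_neg_one (p := p) (base_nonneg hc hn (hle x hx))]
  have hmid : (T + t) / 2 ∈ Ioo T T' := ⟨by linarith [ht.1], by linarith [ht.1, ht.2]⟩
  exact (hstrict hmid ht (by linarith [ht.1])).trans_le (hle _ hmid)

lemma tendsto_deriv_of_tendsto (hc : c < 0) (hn : 0 < n) (hp : 0 < p) (hT : T < T')
    (hode : ∀ t ∈ Ioo T T', ξ' t = rhs c n p (ξ t))
    (hlim : Tendsto ξ (𝓝[>] T) (𝓝 (ξ₀ c n))) : Tendsto ξ' (𝓝[>] T) (𝓝 (-1)) := by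
  have hrhs : ContinuousAt (rhs c n p) (ξ₀ c n) :=
    (continuousAt_radicand (Or.inr hp.le)).sqrt.neg
  rw [← rhs_ξ₀ hc hn.ne' hp.ne' (p := p)]
  refine (hrhs.tendsto.comp hlim).congr' ?_
  filter_upwards [Ioo_mem_nhdsGT hT] with t ht
  exact (hode t ht).symm

lemma second_deriv_eq_rhsDeriv_mul (hc : c < 0) (hn : 0 < n)
    (hξ : ∀ t ∈ Ioo T T', HasDerivAt ξ (ξ' t) t)
    (hξ' : ∀ t ∈ Ioo T T', HasDerivAt ξ' (ξ'' t) t)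
    (hode : ∀ t ∈ Ioo T T', ξ' t = rhs c n p (ξ t))
    (hlim : Tendsto ξ (𝓝[>] T) (𝓝 (ξ₀ c n))) {t : ℝ} (ht : t ∈ Ioo T T') :
    ξ'' t = rhsDeriv c n p (ξ t) * ξ' t := by
  have hbase := base_pos hc hn (lt_ξ₀_of_tendsto hc hn hξ hode hlim ht)
  have hchain := (hasDerivAt_rhs (p := p) hbase).comp t (hξ t ht)
  refine (hξ' t ht).unique (hchain.congr_of_eventuallyEq ?_)
  filter_upwards [isOpen_Ioo.mem_nhds ht] with s hs
  exact hode s hs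

lemma continuousOn_second_deriv (hc : c < 0) (hn : 0 < n)
    (hξ : ∀ t ∈ Ioo T T', HasDerivAt ξ (ξ' t) t)
    (hξ' : ∀ t ∈ Ioo T T', HasDerivAt ξ' (ξ'' t) t)
    (hode : ∀ t ∈ Ioo T T', ξ' t = rhs c n p (ξ t))
    (hlim : Tendsto ξ (𝓝[>] T) (𝓝 (ξ₀ c n))) : ContinuousOn ξ'' (Ioo T T') := by
  intro t ht
  have hbase := base_pos hc hn (lt_ξ₀_of_tendsto hc hn hξ hode hlim ht)
  have hcont : ContinuousAt (fun s => rhsDeriv c n p (ξ s) * ξ' s) t :=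
    ((continuousAt_rhsDeriv hbase).comp (hξ t ht).continuousAt).mul (hξ' t ht).continuousAt
  refine (hcont.congr ?_).continuousWithinAt
  filter_upwards [isOpen_Ioo.mem_nhds ht] with s hs
  exact (second_deriv_eq_rhsDeriv_mul hc hn hξ hξ' hode hlim hs).symm

lemma tendsto_base_div_sub (hc : c < 0) (hn : 0 < n) (hp : 0 < p) (hT : T < T')
    (hξ : ∀ t ∈ Ioo T T', HasDerivAt ξ (ξ' t) t)
    (hode : ∀ t ∈ Ioo T T', ξ' t = rhs c n p (ξ t))
    (hlim : Tendsto ξ (𝓝[>] T) (𝓝 (ξ₀ c n))) :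
    Tendsto (fun t => base c n (ξ t) / (t - T)) (𝓝[>] T) (𝓝 n) := by
  have hbase : Tendsto (fun t => base c n (ξ t)) (𝓝[>] T) (𝓝 0) := by
    have h := ((continuous_base (c := c) (n := n)).tendsto _).comp hlim
    rwa [base_ξ₀ hc hn.ne'] at h
  have hsub : Tendsto (fun t => t - T) (𝓝[>] T) (𝓝 0) := by
    simpa using ((continuous_sub_right T).tendsto T).mono_left nhdsWithin_le_nhds
  have hquot : Tendsto (fun t => c * n * exp (n * ξ t) * ξ' t / 1) (𝓝[>] T) (𝓝 n) := by
    have hcont : Continuous fun x => c * n * exp (n * x) := by fun_prop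
    have h := ((hcont.tendsto (ξ₀ c n)).comp hlim).mul
      (tendsto_deriv_of_tendsto hc hn hp hT hode hlim)
    have hval : c * n * exp (n * ξ₀ c n) * -1 = n := by
      rw [mul_right_comm c, mul_exp_ξ₀ hc hn.ne']
      ring
    simpa only [div_one, hval, Function.comp_def] using h
  exact HasDerivAt.lhopital_zero_right_on_Ioo hT
    (fun t ht => hasDerivAt_base.comp t (hξ t ht))
    (fun t _ => (hasDerivAt_id' t).sub_const T) (fun _ _ => one_ne_zero) hbase hsub hquot

lemma tendsto_rpow_mul_second_deriv (hc : c < 0) (hn : 0 < n) (hp : 0 < p) (hT : T < T')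
    (hξ : ∀ t ∈ Ioo T T', HasDerivAt ξ (ξ' t) t)
    (hξ' : ∀ t ∈ Ioo T T', HasDerivAt ξ' (ξ'' t) t)
    (hode : ∀ t ∈ Ioo T T', ξ' t = rhs c n p (ξ t))
    (hlim : Tendsto ξ (𝓝[>] T) (𝓝 (ξ₀ c n))) :
    Tendsto (fun t => (t - T) ^ (1 - p) * ξ'' t) (𝓝[>] T)
      (𝓝 (-(n ^ p * p * exp (-2 * ξ₀ c n) / 2))) := by
  have hratio : Tendsto (fun t => ((t - T) / base c n (ξ t)) ^ (1 - p)) (𝓝[>] T)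
      (𝓝 (n⁻¹ ^ (1 - p))) :=
    (((tendsto_base_div_sub hc hn hp hT hξ hode hlim).inv₀ hn.ne').congr fun t => inv_div _ _)
      |>.rpow_const (Or.inl (inv_ne_zero hn.ne'))
  have hξ_lt : ∀ᶠ t in 𝓝[>] T, t ∈ Ioo T T' := Ioo_mem_nhdsGT hT
  have hlim_lt : Tendsto ξ (𝓝[>] T) (𝓝[<] ξ₀ c n) := tendsto_nhdsWithin_iff.2
    ⟨hlim, hξ_lt.mono fun t ht => lt_ξ₀_of_tendsto hc hn hξ hode hlim ht⟩
  -- `(t - T)^{1-p} ξ'' = ((t - T) / B)^{1-p} · (B^{1-p} Φ'(ξ)) · ξ'` with `B = base c n (ξ t)`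
  have h := (hratio.mul ((tendsto_base_rpow_mul_rhsDeriv hc hn hp).comp hlim_lt)).mul
    (tendsto_deriv_of_tendsto hc hn hp hT hode hlim)
  have hval : n⁻¹ ^ (1 - p) * (n * p * exp (-2 * ξ₀ c n) / 2) * -1
      = -(n ^ p * p * exp (-2 * ξ₀ c n) / 2) := by
    rw [inv_rpow hn.le, ← rpow_neg hn.le, neg_sub, rpow_sub_one hn.ne']
    field_simp
  rw [hval] at h
  refine h.congr' ?_
  filter_upwards [hξ_lt] with t ht
  have hbase := base_pos hc hn (lt_ξ₀_of_tendsto hc hn hξ hode hlim ht)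
  rw [second_deriv_eq_rhsDeriv_mul hc hn hξ hξ' hode hlim ht, Function.comp_apply,
    div_rpow (sub_pos.2 ht.1).le hbase.le]
  field_simp

end Solution

end RootODE

open RootODE

theorem stmt19_general (n k : ℕ) (hn : 3 ≤ n) (hk2 : 2 ≤ k)
    (c : ℝ) (hsign : (-1 : ℝ) ^ k * c < 0)
    (Tlow Thigh : ℝ) (hT : Tlow < Thigh)
    (ξ ξ' ξ'' : ℝ → ℝ)
    (hderiv1 : ∀ t ∈ Set.Ioo Tlow Thigh, HasDerivAt ξ (ξ' t) t)
    (hderiv2 : ∀ t ∈ Set.Ioo Tlow Thigh, HasDerivAt ξ' (ξ'' t) t)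
    (hODE : ∀ t ∈ Set.Ioo Tlow Thigh, ξ' t =
      -Real.sqrt (1 + Real.exp (-2 * ξ t) *
        (1 + (-1 : ℝ) ^ k * c * Real.exp ((n : ℝ) * ξ t)) ^ ((1 : ℝ) / k)))
    (hlim : Tendsto ξ (nhdsWithin Tlow (Set.Ioi Tlow))
      (nhds (-(1 / (n : ℝ)) * Real.log |c|))) :
    (∃ L : ℝ, L < 0 ∧
      Tendsto (fun t => (t - Tlow) ^ (((k : ℝ) - 1) / k) * ξ'' t)
        (nhdsWithin Tlow (Set.Ioi Tlow)) (nhds L))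
    ∧ ∃ d : ℝ → ℝ, ContinuousOn d (Set.Ico Tlow Thigh)
        ∧ Set.EqOn d ξ' (Set.Ioo Tlow Thigh)
        -- `d` (hence `ξ'`) is `1/k`-Hölder on initial compact subintervals: `C^{1,1/k}`
        ∧ (∀ b ∈ Set.Ioo Tlow Thigh, ∃ C : ℝ,
            ∀ s ∈ Set.Icc Tlow b, ∀ t ∈ Set.Icc Tlow b,
              |d s - d t| ≤ C * |s - t| ^ ((1 : ℝ) / k))
        -- but for any `γ > 1/k` it is not `γ`-Hölder near `T̲`: not `C^{1,γ}`
        ∧ (∀ γ : ℝ, (1 : ℝ) / k < γ → ∀ b ∈ Set.Ioo Tlow Thigh, ∀ C : ℝ,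
            ∃ s ∈ Set.Icc Tlow b, ∃ t ∈ Set.Icc Tlow b,
              C * |s - t| ^ γ < |d s - d t|) := by
  have hn0 : (0 : ℝ) < n := Nat.cast_pos.2 (by omega)
  have hk : (1 : ℝ) ≤ k := by exact_mod_cast (by omega : 1 ≤ k)
  have hp : (0 : ℝ) < 1 / k := by positivity
  have hp1 : (1 : ℝ) / k ≤ 1 := (div_le_one (by positivity)).2 hk
  have hexp : ((k : ℝ) - 1) / k = 1 - 1 / k := by field_simp
  have hode : ∀ t ∈ Ioo Tlow Thigh, ξ' t = rhs ((-1) ^ k * c) n (1 / k) (ξ t) := hODE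
  have hlim₀ : Tendsto ξ (𝓝[>] Tlow) (𝓝 (ξ₀ ((-1) ^ k * c) n)) := by
    simpa [ξ₀, abs_mul] using hlim
  have hξ'' := tendsto_rpow_mul_second_deriv hsign hn0 hp hT hderiv1 hderiv2 hode hlim₀
  have hξ''c := continuousOn_second_deriv hsign hn0 hderiv1 hderiv2 hode hlim₀
  have hξ'c : ContinuousOn ξ' (Ioo Tlow Thigh) := fun t ht =>
    (hderiv2 t ht).continuousAt.continuousWithinAt
  set d := extendFrom (Ioo Tlow Thigh) ξ'
  have hd : ContinuousOn d (Ico Tlow Thigh) := continuousOn_Ico_extendFrom_Ioo hξ'c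
    (tendsto_deriv_of_tendsto hsign hn0 hp hT hode hlim₀)
  have hdξ' : EqOn d ξ' (Ioo Tlow Thigh) := extendFrom_extends hξ'c
  have hd' : ∀ t ∈ Ioo Tlow Thigh, HasDerivAt d (ξ'' t) t := fun t ht =>
    (hderiv2 t ht).congr_of_eventuallyEq (eventually_of_mem (isOpen_Ioo.mem_nhds ht) hdξ')
  refine ⟨⟨_, ?_, by rw [hexp]; exact hξ''⟩, d, hd, hdξ', fun b hb => ?_, fun γ hγ b hb C => ?_⟩
  · exact neg_neg_of_pos (by positivity)
  · exact exists_abs_sub_le_of_tendsto_rpow_mul_deriv hp hp1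
      (hd.mono (Icc_subset_Ico_right hb.2)) (fun t ht => hd' t ⟨ht.1, ht.2.trans hb.2⟩)
      (hξ''c.mono (Ioc_subset_Ioo_right hb.2)) hξ''
  · exact exists_lt_abs_sub_of_tendsto_rpow_mul_deriv hp hγ (neg_neg_of_pos (by positivity))
      hb.1 (hd.mono (Icc_subset_Ico_right hb.2)) (fun t ht => hd' t ⟨ht.1, ht.2.trans hb.2⟩)
      hξ'' C

/-- for a solution of `ξ' = −{1 + e^{−2ξ}[1 + (−1)ᵏ c e^{nξ}]^{1/k}}^{1/2}` on
`(T̲, T̄)` with `(−1)ᵏ c < 0`, `ξ(t) → ξ₀ = −(1/n)ln|c|` and `ξ'(t) → −1` as `t → T̲⁺`,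
the quantity `(t − T̲)^{(k−1)/k} ξ''(t)` converges to a finite negative limit as `t → T̲⁺`;
consequently `ξ'` extends continuously to `[T̲, T̄)`, the extension is `1/k`-Hölder near `T̲`
(so `ξ` extends to a `C^{1,1/k}` function on `[T̲, T̄)`), but for every `γ > 1/k` no such
extension is `γ`-Hölder near `T̲` (`ξ` is not `C^{1,γ}` near `T̲`). -/
theorem stmt19 (n k : ℕ) (hn : 3 ≤ n) (hk2 : 2 ≤ k) (hkn : k ≤ n)
    (c : ℝ) (hsign : (-1 : ℝ) ^ k * c < 0)
    (Tlow Thigh : ℝ) (hT : Tlow < Thigh)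
    (ξ ξ' ξ'' : ℝ → ℝ)
    (hderiv1 : ∀ t ∈ Set.Ioo Tlow Thigh, HasDerivAt ξ (ξ' t) t)
    (hderiv2 : ∀ t ∈ Set.Ioo Tlow Thigh, HasDerivAt ξ' (ξ'' t) t)
    (hODE : ∀ t ∈ Set.Ioo Tlow Thigh, ξ' t =
      -Real.sqrt (1 + Real.exp (-2 * ξ t) *
        (1 + (-1 : ℝ) ^ k * c * Real.exp ((n : ℝ) * ξ t)) ^ ((1 : ℝ) / k)))
    (hlim : Tendsto ξ (nhdsWithin Tlow (Set.Ioi Tlow))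
      (nhds (-(1 / (n : ℝ)) * Real.log |c|)))
    (hlim' : Tendsto ξ' (nhdsWithin Tlow (Set.Ioi Tlow)) (nhds (-1))) :
    (∃ L : ℝ, L < 0 ∧
      Tendsto (fun t => (t - Tlow) ^ (((k : ℝ) - 1) / k) * ξ'' t)
        (nhdsWithin Tlow (Set.Ioi Tlow)) (nhds L))
    ∧ ∃ d : ℝ → ℝ, ContinuousOn d (Set.Ico Tlow Thigh)
        ∧ Set.EqOn d ξ' (Set.Ioo Tlow Thigh)
        -- `d` (hence `ξ'`) is `1/k`-Hölder on initial compact subintervals: `C^{1,1/k}`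
        ∧ (∀ b ∈ Set.Ioo Tlow Thigh, ∃ C : ℝ,
            ∀ s ∈ Set.Icc Tlow b, ∀ t ∈ Set.Icc Tlow b,
              |d s - d t| ≤ C * |s - t| ^ ((1 : ℝ) / k))
        -- but for any `γ > 1/k` it is not `γ`-Hölder near `T̲`: not `C^{1,γ}`
        ∧ (∀ γ : ℝ, (1 : ℝ) / k < γ → ∀ b ∈ Set.Ioo Tlow Thigh, ∀ C : ℝ,
            ∃ s ∈ Set.Icc Tlow b, ∃ t ∈ Set.Icc Tlow b,
              C * |s - t| ^ γ < |d s - d t|) :=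
  stmt19_general n k hn hk2 c hsign Tlow Thigh hT ξ ξ' ξ'' hderiv1 hderiv2 hODE hlim
end
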